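/- arXiv:2508.06370 — 10 statements merged into one kernel-verified Lean document; each statement's English description precedes it below -/
import Mathlib

section
/- Let L be a first-order language, let M be an L-structure, and let ⫫ be a SWIR on M. Then ⫫ satisfies Transitivity: (Tr-left) if B ⫫_A C and D ⫫_{AB} C then BD ⫫_A C, and (Tr-right) if B ⫫_A C and B ⫫_{AC} D then B ⫫_A CD, for all finitely generated substructures A, B, C, D of M. -/
open FirstOrder

namespace Swir

variable {L : Language} {M : Type*} [L.Structure M]

/-- The automorphism `g` fixes the substructure `A` pointwise. -/
def Fixes (g : M ≃[L] M) (A : L.Substructure M) : Prop :=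
  ∀ a ∈ A, g a = a

/-- The image `gA` of the substructure `A` under the automorphism `g`. -/
def aimg (g : M ≃[L] M) (A : L.Substructure M) : L.Substructure M :=
  A.map g.toHom

/-- `B ≡_A B'` : there is an automorphism of `M` fixing `A` pointwise and mapping `B` onto `B'`. -/
def EquivOver (A B B' : L.Substructure M) : Prop :=
  ∃ g : M ≃[L] M, Fixes g A ∧ aimg g B = B'

/-- (Inv).  `Ind A B C` is read `B ⫫_A C`. -/
def InvAx (Ind : L.Substructure M → L.Substructure M → L.Substructure M → Prop) : Prop :=
  ∀ A B C : L.Substructure M, A.FG → B.FG → C.FG → ∀ g : M ≃[L] M,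
    Ind A B C → Ind (aimg g A) (aimg g B) (aimg g C)

/-- (Ex-left) -/
def ExLeftAx (Ind : L.Substructure M → L.Substructure M → L.Substructure M → Prop) : Prop :=
  ∀ A B C : L.Substructure M, A.FG → B.FG → C.FG →
    ∃ B' : L.Substructure M, EquivOver A B B' ∧ Ind A B' C

/-- (Ex-right) -/
def ExRightAx (Ind : L.Substructure M → L.Substructure M → L.Substructure M → Prop) : Prop :=
  ∀ A B C : L.Substructure M, A.FG → B.FG → C.FG →
    ∃ C' : L.Substructure M, EquivOver A C C' ∧ Ind A B C'

/-- (Sta-left) -/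
def StaLeftAx (Ind : L.Substructure M → L.Substructure M → L.Substructure M → Prop) : Prop :=
  ∀ A B B' C : L.Substructure M, A.FG → B.FG → B'.FG → C.FG →
    Ind A B C → Ind A B' C →
    ∀ g : M ≃[L] M, Fixes g A → aimg g B = B' →
      ∃ h : M ≃[L] M, Fixes h (A ⊔ C) ∧ ∀ b ∈ B, h b = g b

/-- (Sta-right) -/
def StaRightAx (Ind : L.Substructure M → L.Substructure M → L.Substructure M → Prop) : Prop :=
  ∀ A B C C' : L.Substructure M, A.FG → B.FG → C.FG → C'.FG →
    Ind A B C → Ind A B C' →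
    ∀ g : M ≃[L] M, Fixes g A → aimg g C = C' →
      ∃ h : M ≃[L] M, Fixes h (A ⊔ B) ∧ ∀ c ∈ C, h c = g c

/-- (Mon-left) -/
def MonLeftAx (Ind : L.Substructure M → L.Substructure M → L.Substructure M → Prop) : Prop :=
  ∀ A B C D : L.Substructure M, A.FG → B.FG → C.FG → D.FG →
    Ind A (B ⊔ D) C → Ind A B C ∧ Ind (A ⊔ B) D C

/-- (Mon-right) -/
def MonRightAx (Ind : L.Substructure M → L.Substructure M → L.Substructure M → Prop) : Prop :=
  ∀ A B C D : L.Substructure M, A.FG → B.FG → C.FG → D.FG →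
    Ind A B (C ⊔ D) → Ind A B C ∧ Ind (A ⊔ C) B D

/-- (Tr-left) -/
def TrLeftAx (Ind : L.Substructure M → L.Substructure M → L.Substructure M → Prop) : Prop :=
  ∀ A B C D : L.Substructure M, A.FG → B.FG → C.FG → D.FG →
    Ind A B C → Ind (A ⊔ B) D C → Ind A (B ⊔ D) C

/-- (Tr-right) -/
def TrRightAx (Ind : L.Substructure M → L.Substructure M → L.Substructure M → Prop) : Prop :=
  ∀ A B C D : L.Substructure M, A.FG → B.FG → C.FG → D.FG →
    Ind A B C → Ind (A ⊔ C) B D → Ind A B (C ⊔ D)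

/-- A stationary weak independence relation (SWIR) on `M`. -/
structure IsSWIR (Ind : L.Substructure M → L.Substructure M → L.Substructure M → Prop) : Prop where
  inv : InvAx Ind
  exLeft : ExLeftAx Ind
  exRight : ExRightAx Ind
  staLeft : StaLeftAx Ind
  staRight : StaRightAx Ind
  monLeft : MonLeftAx Ind
  monRight : MonRightAx Ind

/- ### Auxiliary lemmas -/

lemma fixes_mono {g : M ≃[L] M} {A B : L.Substructure M} (h : Fixes g A) (hBA : B ≤ A) :
    Fixes g B := fun a ha => h a (hBA ha)

lemma fixes_sup {g : M ≃[L] M} {A B : L.Substructure M} (hA : Fixes g A) (hB : Fixes g B) :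
    Fixes g (A ⊔ B) := by
  have h : A ⊔ B ≤ Language.Hom.eqLocus g.toHom (Language.Hom.id L M) :=
    sup_le (fun x hx => hA x hx) (fun x hx => hB x hx)
  intro a ha
  exact h ha

lemma fixes_symm {g : M ≃[L] M} {A : L.Substructure M} (h : Fixes g A) : Fixes g.symm A := by
  intro a ha
  conv_lhs => rw [← h a ha]
  exact g.symm_apply_apply a

lemma aimg_sup (g : M ≃[L] M) (A B : L.Substructure M) :
    aimg g (A ⊔ B) = aimg g A ⊔ aimg g B :=
  FirstOrder.Language.Substructure.map_sup A B g.toHom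

lemma mem_aimg {g : M ≃[L] M} {A : L.Substructure M} {x : M} :
    x ∈ aimg g A ↔ ∃ y ∈ A, g y = x := by
  simp [aimg, FirstOrder.Language.Substructure.mem_map]

lemma aimg_comp (g h : M ≃[L] M) (A : L.Substructure M) :
    aimg (h.comp g) A = aimg h (aimg g A) := by
  ext x
  simp only [mem_aimg]
  constructor
  · rintro ⟨y, hy, rfl⟩
    exact ⟨g y, ⟨y, hy, rfl⟩, rfl⟩
  · rintro ⟨z, ⟨y, hy, rfl⟩, rfl⟩
    exact ⟨y, hy, rfl⟩

lemma fixes_aimg {g : M ≃[L] M} {A : L.Substructure M} (h : Fixes g A) : aimg g A = A := by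
  ext x
  rw [mem_aimg]
  constructor
  · rintro ⟨y, hy, rfl⟩
    rwa [h y hy]
  · intro hx
    exact ⟨x, hx, h x hx⟩

lemma aimg_congr {g h : M ≃[L] M} {B : L.Substructure M} (he : ∀ b ∈ B, g b = h b) :
    aimg g B = aimg h B := by
  ext x
  simp only [mem_aimg]
  constructor
  · rintro ⟨y, hy, rfl⟩
    exact ⟨y, hy, (he y hy).symm⟩
  · rintro ⟨y, hy, rfl⟩
    exact ⟨y, hy, he y hy⟩

lemma aimg_symm_aimg (g : M ≃[L] M) (B : L.Substructure M) :
    aimg g.symm (aimg g B) = B := by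
  ext x
  simp only [mem_aimg]
  constructor
  · rintro ⟨z, ⟨y, hy, rfl⟩, rfl⟩
    rwa [g.symm_apply_apply]
  · intro hx
    exact ⟨g x, ⟨x, hx, rfl⟩, g.symm_apply_apply x⟩

lemma aimg_fg {g : M ≃[L] M} {B : L.Substructure M} (hB : B.FG) : (aimg g B).FG :=
  hB.map g.toHom

/-- Generic form of the transitivity argument, from the left-handed axioms. -/
lemma trLeft_of (Ind : L.Substructure M → L.Substructure M → L.Substructure M → Prop)
    (hInv : InvAx Ind) (hEx : ExLeftAx Ind) (hSta : StaLeftAx Ind) (hMon : MonLeftAx Ind) :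
    TrLeftAx Ind := by
  intro A B C D hA hB hC hD hBC hDC
  -- Get a copy of B ⊔ D independent from C over A
  obtain ⟨E, ⟨g, hgA, hgBD⟩, hEC⟩ := hEx A (B ⊔ D) C hA (hB.sup hD) hC
  subst hgBD
  rw [aimg_sup] at hEC
  -- Split by monotonicity
  obtain ⟨h1, h2⟩ := hMon A (aimg g B) C (aimg g D) hA (aimg_fg hB) hC (aimg_fg hD) hEC
  -- Stationarity over A between B and gB
  obtain ⟨h, hhAC, hhB⟩ := hSta A B (aimg g B) C hA hB (aimg_fg hB) hC hBC h1 g hgA rfl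
  have hhACsymm : Fixes h.symm (A ⊔ C) := fixes_symm hhAC
  have hhA : Fixes h.symm A := fixes_mono hhACsymm le_sup_left
  have hhC : Fixes h.symm C := fixes_mono hhACsymm le_sup_right
  have himgB : aimg g B = aimg h B := aimg_congr (fun b hb => (hhB b hb).symm)
  -- transport h2 by h.symm
  have step1 := hInv (A ⊔ aimg g B) (aimg g D) C (hA.sup (aimg_fg hB)) (aimg_fg hD) hC h.symm h2
  rw [aimg_sup, fixes_aimg hhA, fixes_aimg hhC, himgB, aimg_symm_aimg] at step1
  -- step1 : Ind (A ⊔ B) (aimg h.symm (aimg g D)) C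
  set fD := aimg h.symm (aimg g D) with hfD
  have hfDfg : fD.FG := aimg_fg (aimg_fg hD)
  -- the automorphism f = h.symm ∘ g fixes A ⊔ B and maps D onto fD
  set f := h.symm.comp g with hf
  have hfAB : Fixes f (A ⊔ B) := by
    apply fixes_sup
    · intro a ha
      show h.symm (g a) = a
      rw [hgA a ha]
      exact hhA a ha
    · intro b hb
      show h.symm (g b) = b
      rw [← hhB b hb]
      exact h.symm_apply_apply b
  have hfD' : aimg f D = fD := aimg_comp g h.symm D
  -- stationarity over A ⊔ B between D and fD
  obtain ⟨k, hkABC, hkD⟩ :=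
    hSta (A ⊔ B) D fD C (hA.sup hB) hD hfDfg hC hDC step1 f hfAB hfD'
  have hkABCsymm : Fixes k.symm ((A ⊔ B) ⊔ C) := fixes_symm hkABC
  have hkA : Fixes k.symm A := fixes_mono hkABCsymm (le_trans le_sup_left le_sup_left)
  have hkB : Fixes k.symm B := fixes_mono hkABCsymm (le_trans le_sup_right le_sup_left)
  have hkC : Fixes k.symm C := fixes_mono hkABCsymm le_sup_right
  have hkfD : aimg k.symm fD = D := by
    have : aimg k D = fD := by rw [← hfD']; exact aimg_congr hkD
    rw [← this, aimg_symm_aimg]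
  -- transport hEC by h.symm then k.symm
  have step2 := hInv A (aimg g B ⊔ aimg g D) C hA ((aimg_fg hB).sup (aimg_fg hD)) hC h.symm hEC
  rw [aimg_sup, fixes_aimg hhA, fixes_aimg hhC, himgB, aimg_symm_aimg] at step2
  -- step2 : Ind A (B ⊔ fD) C
  have step3 := hInv A (B ⊔ fD) C hA (hB.sup hfDfg) hC k.symm step2
  rw [aimg_sup, fixes_aimg hkA, fixes_aimg (fixes_mono hkABCsymm le_sup_right),
    fixes_aimg hkB, hkfD] at step3
  exact step3

/-- every SWIR satisfies Transitivity, (Tr-left) and (Tr-right). -/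
theorem swir_transitivity
    (Ind : L.Substructure M → L.Substructure M → L.Substructure M → Prop)
    (hSwir : IsSWIR Ind) :
    TrLeftAx Ind ∧ TrRightAx Ind := by
  constructor
  · exact trLeft_of Ind hSwir.inv hSwir.exLeft hSwir.staLeft hSwir.monLeft
  · -- apply the generic lemma to the flipped relation
    have h := trLeft_of (fun A B C => Ind A C B)
      (fun A B C hA hB hC g hi => hSwir.inv A C B hA hC hB g hi)
      (fun A B C hA hB hC => hSwir.exRight A C B hA hC hB)
      (fun A B B' C hA hB hB' hC h1 h2 g hg hi =>
        hSwir.staRight A C B B' hA hC hB hB' h1 h2 g hg hi)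
      (fun A B C D hA hB hC hD hi => hSwir.monRight A C B D hA hC hB hD hi)
    intro A B C D hA hB hC hD h1 h2
    exact h A C B D hA hC hB hD h1 h2
end Swir
end

section
/- Let L be a first-order language, let M be an L-structure with a SWIR ⫫, and suppose M has strong amalgamation in the following sense: for all finitely generated substructures A ≤ B of M there is an automorphism g of M fixing A pointwise such that the intersection of the underlying sets of gB and B equals the underlying set of A. Then for all finitely generated substructures A, B, C of M, if B ⫫_A C then the underlying sets satisfy B ∩ C ⊆ A (equivalently, B∖A and C∖A are disjoint). -/
open FirstOrder

namespace Swir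

variable {L : Language} {M : Type*} [L.Structure M]

/-- if `M` has a SWIR `⫫` and strong amalgamation (for all finitely generated
substructures `A ≤ B` there is an automorphism `g` of `M` fixing `A` pointwise with
`gB ∩ B = A` as sets), then `B ⫫_A C` implies `B ∩ C ⊆ A` as sets. -/
theorem inter_subset_base_of_swir
    (Ind : L.Substructure M → L.Substructure M → L.Substructure M → Prop)
    (hSwir : IsSWIR Ind)
    (hSA : ∀ A B : L.Substructure M, A.FG → B.FG → A ≤ B →
      ∃ g : M ≃[L] M, Fixes g A ∧ (aimg g B : Set M) ∩ (B : Set M) = (A : Set M)) :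
    ∀ A B C : L.Substructure M, A.FG → B.FG → C.FG →
      Ind A B C → (B : Set M) ∩ (C : Set M) ⊆ (A : Set M) := by
  intro A B C hA hB hC hInd m hm
  obtain ⟨hmB, hmC⟩ := hm
  -- strong amalgamation for A ≤ A ⊔ C
  obtain ⟨f, hfA, hfInter⟩ := hSA A (A ⊔ C) hA (hA.sup hC) le_sup_left
  set C₂ : L.Substructure M := aimg f C with hC₂def
  have hC₂ : C₂.FG := hC.map f.toHom
  -- Ex-left : find B' ≡_A B independent from C ⊔ C₂
  obtain ⟨B', ⟨j, hjA, hjB⟩, hIndB'⟩ :=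
    hSwir.exLeft A B (C ⊔ C₂) hA hB (hC.sup hC₂)
  have hB' : B'.FG := by rw [← hjB]; exact hB.map j.toHom
  have hIndB'C : Ind A B' C := (hSwir.monRight A B' C C₂ hA hB' hC hC₂ hIndB').1
  have hIndB'C₂ : Ind A B' C₂ := by
    have := hSwir.monRight A B' C₂ C hA hB' hC₂ hC (by rwa [sup_comm] at hIndB')
    exact this.1
  -- Sta-left: j fixes m, hence m ∈ B'
  obtain ⟨h, hhfix, hhB⟩ :=
    hSwir.staLeft A B B' C hA hB hB' hC hInd hIndB'C j hjA hjB
  have hjm : j m = m := by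
    rw [← hhB m hmB]
    exact hhfix m ((le_sup_right : C ≤ A ⊔ C) hmC)
  have hmB' : m ∈ B' := by
    rw [← hjB]
    exact ⟨m, hmB, hjm⟩
  -- Sta-right: f fixes m
  obtain ⟨h', hh'fix, hh'C⟩ :=
    hSwir.staRight A B' C C₂ hA hB' hC hC₂ hIndB'C hIndB'C₂ f hfA rfl
  have hfm : f m = m := by
    rw [← hh'C m hmC]
    exact hh'fix m ((le_sup_right : B' ≤ A ⊔ B') hmB')
  -- conclude m ∈ A using strong amalgamation
  have hmE : m ∈ (A ⊔ C : L.Substructure M) := (le_sup_right : C ≤ A ⊔ C) hmC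
  have hmfE : m ∈ (aimg f (A ⊔ C) : Set M) := ⟨m, hmE, hfm⟩
  have : m ∈ (aimg f (A ⊔ C) : Set M) ∩ ((A ⊔ C : L.Substructure M) : Set M) :=
    ⟨hmfE, hmE⟩
  rwa [hfInter] at this

end Swir
end

section
/- Let M be the generic two-graph: a countably infinite two-graph which is ultrahomogeneous (every isomorphism between finite induced sub-two-graphs of M extends to an automorphism of M) and into which every finite two-graph embeds. Then M does not have a local SWIR: there is no ternary relation on the nonempty finite subsets of M satisfying (Inv), (Ex), (Sta) and (Mon). -/
namespace Stmt7

open scoped Classical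

variable {M : Type*}

/-- The permutation `g` fixes the finite set `A` pointwise. -/
def Fixes (g : Equiv.Perm M) (A : Finset M) : Prop := ∀ a ∈ A, g a = a

/-- The image `g(A)` of a finite set under a permutation. -/
def pimg (g : Equiv.Perm M) (A : Finset M) : Finset M := A.map g.toEmbedding

/-- `B ≡_A B'` : some automorphism (with respect to the predicate `Auto`) fixes `A`
pointwise and maps `B` onto `B'`. -/
def EquivOver (Auto : Equiv.Perm M → Prop) (A B B' : Finset M) : Prop :=
  ∃ g : Equiv.Perm M, Auto g ∧ Fixes g A ∧ pimg g B = B'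

/-- A local SWIR: a ternary relation `Ind` on the nonempty finite subsets of `M`
(`Ind A B C` is read `B ⫫_A C`) satisfying (Inv), (Ex), (Sta) and (Mon) with respect to
the automorphisms of `M` (the permutations satisfying `Auto`). -/
structure IsLocalSWIR (Auto : Equiv.Perm M → Prop)
    (Ind : Finset M → Finset M → Finset M → Prop) : Prop where
  inv : ∀ A B C : Finset M, A.Nonempty → B.Nonempty → C.Nonempty →
    ∀ g : Equiv.Perm M, Auto g → Ind A B C → Ind (pimg g A) (pimg g B) (pimg g C)
  exLeft : ∀ A B C : Finset M, A.Nonempty → B.Nonempty → C.Nonempty →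
    ∃ B' : Finset M, EquivOver Auto A B B' ∧ Ind A B' C
  exRight : ∀ A B C : Finset M, A.Nonempty → B.Nonempty → C.Nonempty →
    ∃ C' : Finset M, EquivOver Auto A C C' ∧ Ind A B C'
  staLeft : ∀ A B B' C : Finset M, A.Nonempty → B.Nonempty → B'.Nonempty → C.Nonempty →
    Ind A B C → Ind A B' C →
    ∀ g : Equiv.Perm M, Auto g → Fixes g A → pimg g B = B' →
      ∃ h : Equiv.Perm M, Auto h ∧ Fixes h (A ∪ C) ∧ ∀ b ∈ B, h b = g b
  staRight : ∀ A B C C' : Finset M, A.Nonempty → B.Nonempty → C.Nonempty → C'.Nonempty →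
    Ind A B C → Ind A B C' →
    ∀ g : Equiv.Perm M, Auto g → Fixes g A → pimg g C = C' →
      ∃ h : Equiv.Perm M, Auto h ∧ Fixes h (A ∪ B) ∧ ∀ c ∈ C, h c = g c
  monLeft : ∀ A B C D : Finset M, A.Nonempty → B.Nonempty → C.Nonempty → D.Nonempty →
    Ind A (B ∪ D) C → Ind A B C ∧ Ind (A ∪ B) D C
  monRight : ∀ A B C D : Finset M, A.Nonempty → B.Nonempty → C.Nonempty → D.Nonempty →
    Ind A B (C ∪ D) → Ind A B C ∧ Ind (A ∪ C) B D

/-- A two-graph structure on `V`, given by its edge relation `T` (a symmetric ternary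
relation holding only on triples of pairwise distinct elements) such that every
4-element subset carries an even number of 3-edges. -/
structure IsTwoGraph {V : Type*} (T : V → V → V → Prop) : Prop where
  symm_swap₁₂ : ∀ a b c, T a b c → T b a c
  symm_swap₂₃ : ∀ a b c, T a b c → T a c b
  distinct : ∀ a b c, T a b c → a ≠ b ∧ a ≠ c ∧ b ≠ c
  even4 : ∀ a b c d : V, a ≠ b → a ≠ c → a ≠ d → b ≠ c → b ≠ d → c ≠ d →
    Even ((if T a b c then 1 else 0) + (if T a b d then 1 else 0) +
          (if T a c d then 1 else 0) + (if T b c d then 1 else 0) : ℕ)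

private lemma two_ne {V : Type*} {T : V → V → V → Prop} (hTG : IsTwoGraph T) :
    ∀ u v w : V, u = v ∨ u = w ∨ v = w → ¬ T u v w := by
  rintro u v w (rfl | rfl | rfl) h
  · exact (hTG.distinct _ _ _ h).1 rfl
  · exact (hTG.distinct _ _ _ h).2.1 rfl
  · exact (hTG.distinct _ _ _ h).2.2 rfl

private lemma ext2 (T : M → M → M → Prop) (hTG : IsTwoGraph T)
    (ultra : ∀ (A B : Finset M) (h : (↑A : Set M) → (↑B : Set M)), Function.Bijective h →
      (∀ x y z : (↑A : Set M), T (x : M) (y : M) (z : M) ↔ T (h x : M) (h y : M) (h z : M)) →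
      ∃ g : Equiv.Perm M, (∀ a b c : M, T (g a) (g b) (g c) ↔ T a b c) ∧
        ∀ x : (↑A : Set M), g (x : M) = (h x : M))
    (x1 x2 y1 y2 : M) (hx : x1 ≠ x2) (hy : y1 ≠ y2) :
    ∃ g : Equiv.Perm M, (∀ a b c : M, T (g a) (g b) (g c) ↔ T a b c) ∧ g x1 = y1 ∧ g x2 = y2 := by
  classical
  have hm1 : y1 ∈ (↑({y1, y2} : Finset M) : Set M) := by simp
  have hm2 : y2 ∈ (↑({y1, y2} : Finset M) : Set M) := by simp
  let e : (↑({x1, x2} : Finset M) : Set M) → (↑({y1, y2} : Finset M) : Set M) :=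
    fun p => if (p : M) = x1 then ⟨y1, hm1⟩ else ⟨y2, hm2⟩
  have hval1 : ∀ p : (↑({x1, x2} : Finset M) : Set M), (p : M) = x1 → ((e p : M)) = y1 := by
    intro p hp; simp only [e]; rw [if_pos hp]
  have hval2 : ∀ p : (↑({x1, x2} : Finset M) : Set M), (p : M) = x2 → ((e p : M)) = y2 := by
    intro p hp
    have hne : ¬ ((p : M) = x1) := by rw [hp]; exact hx.symm
    simp only [e]; rw [if_neg hne]
  have habs : ∀ p : (↑({x1, x2} : Finset M) : Set M), ((p : M) = x1 ∧ ((e p : M)) = y1) ∨ ((p : M) = x2 ∧ ((e p : M)) = y2) := by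
    intro p
    have hp : (p : M) = x1 ∨ (p : M) = x2 := by have := p.2; simpa using this
    rcases hp with hp | hp
    · exact Or.inl ⟨hp, hval1 p hp⟩
    · exact Or.inr ⟨hp, hval2 p hp⟩
  have hbij : Function.Bijective e := by
    constructor
    · intro p q hpq
      rcases habs p with ⟨hp, hvp⟩ | ⟨hp, hvp⟩ <;> rcases habs q with ⟨hq, hvq⟩ | ⟨hq, hvq⟩ <;>
        first
          | exact Subtype.ext (hp.trans hq.symm)
          | exact absurd (hvp.symm.trans ((congrArg Subtype.val hpq).trans hvq)) hy
          | exact absurd (hvp.symm.trans ((congrArg Subtype.val hpq).trans hvq)) hy.symm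
    · intro q
      have hq : (q : M) = y1 ∨ (q : M) = y2 := by have := q.2; simpa using this
      rcases hq with hq | hq
      · exact ⟨⟨x1, by simp⟩, Subtype.ext ((hval1 _ rfl).trans hq.symm)⟩
      · exact ⟨⟨x2, by simp⟩, Subtype.ext ((hval2 _ rfl).trans hq.symm)⟩
  have hcond : ∀ x y z : (↑({x1, x2} : Finset M) : Set M),
      T (x : M) (y : M) (z : M) ↔ T (e x : M) (e y : M) (e z : M) := by
    intro x y z
    rcases habs x with ⟨hp, hvp⟩ | ⟨hp, hvp⟩ <;>
      rcases habs y with ⟨hq, hvq⟩ | ⟨hq, hvq⟩ <;>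
        rcases habs z with ⟨hr, hvr⟩ | ⟨hr, hvr⟩ <;>
          rw [hp, hq, hr, hvp, hvq, hvr] <;>
            first
              | exact iff_of_false (two_ne hTG _ _ _ (Or.inl rfl)) (two_ne hTG _ _ _ (Or.inl rfl))
              | exact iff_of_false (two_ne hTG _ _ _ (Or.inr (Or.inl rfl)))
                  (two_ne hTG _ _ _ (Or.inr (Or.inl rfl)))
              | exact iff_of_false (two_ne hTG _ _ _ (Or.inr (Or.inr rfl)))
                  (two_ne hTG _ _ _ (Or.inr (Or.inr rfl)))
  obtain ⟨g, hg, hgx⟩ := ultra {x1, x2} {y1, y2} e hbij hcond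
  exact ⟨g, hg, (hgx ⟨x1, by simp⟩).trans (hval1 _ rfl), (hgx ⟨x2, by simp⟩).trans (hval2 _ rfl)⟩

private lemma ext3 (T : M → M → M → Prop) (hTG : IsTwoGraph T)
    (ultra : ∀ (A B : Finset M) (h : (↑A : Set M) → (↑B : Set M)), Function.Bijective h →
      (∀ x y z : (↑A : Set M), T (x : M) (y : M) (z : M) ↔ T (h x : M) (h y : M) (h z : M)) →
      ∃ g : Equiv.Perm M, (∀ a b c : M, T (g a) (g b) (g c) ↔ T a b c) ∧
        ∀ x : (↑A : Set M), g (x : M) = (h x : M))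
    (x1 x2 x3 y1 y2 y3 : M) (hx12 : x1 ≠ x2) (hx13 : x1 ≠ x3) (hx23 : x2 ≠ x3)
    (hy12 : y1 ≠ y2) (hy13 : y1 ≠ y3) (hy23 : y2 ≠ y3)
    (hiff : T x1 x2 x3 ↔ T y1 y2 y3) :
    ∃ g : Equiv.Perm M, (∀ a b c : M, T (g a) (g b) (g c) ↔ T a b c) ∧
      g x1 = y1 ∧ g x2 = y2 ∧ g x3 = y3 := by
  classical
  have s12 : ∀ u v w : M, T u v w ↔ T v u w :=
    fun u v w => ⟨hTG.symm_swap₁₂ u v w, hTG.symm_swap₁₂ v u w⟩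
  have s23 : ∀ u v w : M, T u v w ↔ T u w v :=
    fun u v w => ⟨hTG.symm_swap₂₃ u v w, hTG.symm_swap₂₃ u w v⟩
  have i123 : T x1 x2 x3 ↔ T y1 y2 y3 := hiff
  have i213 : T x2 x1 x3 ↔ T y2 y1 y3 := (s12 x2 x1 x3).trans (i123.trans (s12 y1 y2 y3))
  have i132 : T x1 x3 x2 ↔ T y1 y3 y2 := (s23 x1 x3 x2).trans (i123.trans (s23 y1 y2 y3))
  have i231 : T x2 x3 x1 ↔ T y2 y3 y1 := (s23 x2 x3 x1).trans (i213.trans (s23 y2 y1 y3))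
  have i312 : T x3 x1 x2 ↔ T y3 y1 y2 := (s12 x3 x1 x2).trans (i132.trans (s12 y1 y3 y2))
  have i321 : T x3 x2 x1 ↔ T y3 y2 y1 := (s12 x3 x2 x1).trans (i231.trans (s12 y2 y3 y1))
  have hm1 : y1 ∈ (↑({y1, y2, y3} : Finset M) : Set M) := by simp
  have hm2 : y2 ∈ (↑({y1, y2, y3} : Finset M) : Set M) := by simp
  have hm3 : y3 ∈ (↑({y1, y2, y3} : Finset M) : Set M) := by simp
  let e : (↑({x1, x2, x3} : Finset M) : Set M) → (↑({y1, y2, y3} : Finset M) : Set M) :=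
    fun p => if (p : M) = x1 then ⟨y1, hm1⟩ else if (p : M) = x2 then ⟨y2, hm2⟩ else ⟨y3, hm3⟩
  have hval1 : ∀ p : (↑({x1, x2, x3} : Finset M) : Set M), (p : M) = x1 → ((e p : M)) = y1 := by
    intro p hp; simp only [e]; rw [if_pos hp]
  have hval2 : ∀ p : (↑({x1, x2, x3} : Finset M) : Set M), (p : M) = x2 → ((e p : M)) = y2 := by
    intro p hp
    have hne : ¬ ((p : M) = x1) := by rw [hp]; exact hx12.symm
    simp only [e]; rw [if_neg hne, if_pos hp]
  have hval3 : ∀ p : (↑({x1, x2, x3} : Finset M) : Set M), (p : M) = x3 → ((e p : M)) = y3 := by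
    intro p hp
    have hne1 : ¬ ((p : M) = x1) := by rw [hp]; exact hx13.symm
    have hne2 : ¬ ((p : M) = x2) := by rw [hp]; exact hx23.symm
    simp only [e]; rw [if_neg hne1, if_neg hne2]
  have habs : ∀ p : (↑({x1, x2, x3} : Finset M) : Set M), ((p : M) = x1 ∧ ((e p : M)) = y1) ∨ ((p : M) = x2 ∧ ((e p : M)) = y2) ∨
      ((p : M) = x3 ∧ ((e p : M)) = y3) := by
    intro p
    have hp : (p : M) = x1 ∨ (p : M) = x2 ∨ (p : M) = x3 := by have := p.2; simpa using this
    rcases hp with hp | hp | hp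
    · exact Or.inl ⟨hp, hval1 p hp⟩
    · exact Or.inr (Or.inl ⟨hp, hval2 p hp⟩)
    · exact Or.inr (Or.inr ⟨hp, hval3 p hp⟩)
  have hbij : Function.Bijective e := by
    constructor
    · intro p q hpq
      rcases habs p with ⟨hp, hvp⟩ | ⟨hp, hvp⟩ | ⟨hp, hvp⟩ <;>
        rcases habs q with ⟨hq, hvq⟩ | ⟨hq, hvq⟩ | ⟨hq, hvq⟩ <;>
          first
            | exact Subtype.ext (hp.trans hq.symm)
            | exact absurd (hvp.symm.trans ((congrArg Subtype.val hpq).trans hvq)) hy12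
            | exact absurd (hvp.symm.trans ((congrArg Subtype.val hpq).trans hvq)) hy13
            | exact absurd (hvp.symm.trans ((congrArg Subtype.val hpq).trans hvq)) hy23
            | exact absurd (hvp.symm.trans ((congrArg Subtype.val hpq).trans hvq)) hy12.symm
            | exact absurd (hvp.symm.trans ((congrArg Subtype.val hpq).trans hvq)) hy13.symm
            | exact absurd (hvp.symm.trans ((congrArg Subtype.val hpq).trans hvq)) hy23.symm
    · intro q
      have hq : (q : M) = y1 ∨ (q : M) = y2 ∨ (q : M) = y3 := by have := q.2; simpa using this
      rcases hq with hq | hq | hq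
      · exact ⟨⟨x1, by simp⟩, Subtype.ext ((hval1 _ rfl).trans hq.symm)⟩
      · exact ⟨⟨x2, by simp⟩, Subtype.ext ((hval2 _ rfl).trans hq.symm)⟩
      · exact ⟨⟨x3, by simp⟩, Subtype.ext ((hval3 _ rfl).trans hq.symm)⟩
  have hcond : ∀ x y z : (↑({x1, x2, x3} : Finset M) : Set M),
      T (x : M) (y : M) (z : M) ↔ T (e x : M) (e y : M) (e z : M) := by
    intro x y z
    rcases habs x with ⟨hp, hvp⟩ | ⟨hp, hvp⟩ | ⟨hp, hvp⟩ <;>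
      rcases habs y with ⟨hq, hvq⟩ | ⟨hq, hvq⟩ | ⟨hq, hvq⟩ <;>
        rcases habs z with ⟨hr, hvr⟩ | ⟨hr, hvr⟩ | ⟨hr, hvr⟩ <;>
          rw [hp, hq, hr, hvp, hvq, hvr] <;>
            first
              | exact iff_of_false (two_ne hTG _ _ _ (Or.inl rfl)) (two_ne hTG _ _ _ (Or.inl rfl))
              | exact iff_of_false (two_ne hTG _ _ _ (Or.inr (Or.inl rfl)))
                  (two_ne hTG _ _ _ (Or.inr (Or.inl rfl)))
              | exact iff_of_false (two_ne hTG _ _ _ (Or.inr (Or.inr rfl)))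
                  (two_ne hTG _ _ _ (Or.inr (Or.inr rfl)))
              | exact i123 | exact i213 | exact i132 | exact i231 | exact i312 | exact i321
  obtain ⟨g, hg, hgx⟩ := ultra {x1, x2, x3} {y1, y2, y3} e hbij hcond
  exact ⟨g, hg, (hgx ⟨x1, by simp⟩).trans (hval1 _ rfl), (hgx ⟨x2, by simp⟩).trans (hval2 _ rfl),
    (hgx ⟨x3, by simp⟩).trans (hval3 _ rfl)⟩


private lemma pimg_single (g : Equiv.Perm M) (x : M) : pimg g {x} = {g x} :=
  Finset.map_singleton _ _

/-- the generic two-graph (a countably infinite, ultrahomogeneous two-graph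
into which every finite two-graph embeds) does not have a local SWIR. -/
theorem generic_twoGraph_no_localSWIR
    (T : M → M → M → Prop) [Countable M] [Infinite M] (hTG : IsTwoGraph T)
    (ultra : ∀ (A B : Finset M) (h : (↑A : Set M) → (↑B : Set M)), Function.Bijective h →
      (∀ x y z : (↑A : Set M), T (x : M) (y : M) (z : M) ↔ T (h x : M) (h y : M) (h z : M)) →
      ∃ g : Equiv.Perm M, (∀ a b c : M, T (g a) (g b) (g c) ↔ T a b c) ∧
        ∀ x : (↑A : Set M), g (x : M) = (h x : M))
    (univ : ∀ (n : ℕ) (T' : Fin n → Fin n → Fin n → Prop), IsTwoGraph T' →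
      ∃ f : Fin n → M, Function.Injective f ∧ ∀ a b c, T' a b c ↔ T (f a) (f b) (f c)) :
    ¬ ∃ Ind : Finset M → Finset M → Finset M → Prop,
        IsLocalSWIR (fun g : Equiv.Perm M => ∀ a b c : M, T (g a) (g b) (g c) ↔ T a b c) Ind := by
  rintro ⟨Ind, hS⟩
  classical
  have s12 : ∀ u v w : M, T u v w ↔ T v u w :=
    fun u v w => ⟨hTG.symm_swap₁₂ u v w, hTG.symm_swap₁₂ v u w⟩
  have s23 : ∀ u v w : M, T u v w ↔ T u w v :=
    fun u v w => ⟨hTG.symm_swap₂₃ u v w, hTG.symm_swap₂₃ u w v⟩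
  -- L3: extension of independent singletons avoiding any prescribed finite set
  have L3 : ∀ (a : M) (C : Finset M), C.Nonempty → ∃ b, b ∉ insert a C ∧ Ind {a} {b} C := by
    intro a C hC
    obtain ⟨t, hat, htc⟩ := Infinite.exists_superset_card_eq ({a} : Finset M) (C.card + 3)
      (by simp only [Finset.card_singleton]; omega)
    have hamem : a ∈ t := hat (by simp)
    have hBcard : (t.erase a).card = C.card + 2 := by
      rw [Finset.card_erase_of_mem hamem, htc]
      omega
    have hBne : (t.erase a).Nonempty := Finset.card_pos.mp (by omega)
    obtain ⟨B', hEq, hIndB⟩ := hS.exLeft {a} (t.erase a) C (Finset.singleton_nonempty a) hBne hC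
    obtain ⟨g, hg, hgfix, hgB⟩ : ∃ g : Equiv.Perm M,
        (∀ x y z : M, T (g x) (g y) (g z) ↔ T x y z) ∧ Fixes g {a} ∧ pimg g (t.erase a) = B' := hEq
    have hB'card : B'.card = C.card + 2 := by
      rw [← hgB]; unfold pimg; rw [Finset.card_map]; exact hBcard
    have hnotsub : ¬ B' ⊆ insert a C := by
      intro hsub
      have h1 := Finset.card_le_card hsub
      have h2 := Finset.card_insert_le a C
      omega
    obtain ⟨b, hbB', hbn⟩ := Finset.not_subset.mp hnotsub
    have hD : ({b} ∪ B'.erase b) = B' := by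
      rw [← Finset.insert_eq, Finset.insert_erase hbB']
    have hDne : (B'.erase b).Nonempty := by
      apply Finset.card_pos.mp
      rw [Finset.card_erase_of_mem hbB']
      omega
    have hmon := hS.monLeft {a} {b} C (B'.erase b) (Finset.singleton_nonempty a)
      (Finset.singleton_nonempty b) hC hDne (by rw [hD]; exact hIndB)
    exact ⟨b, hbn, hmon.1⟩
  -- base configuration
  obtain ⟨a0, -⟩ := Infinite.exists_notMem_finset (∅ : Finset M)
  obtain ⟨c0, hc0⟩ := Infinite.exists_notMem_finset ({a0} : Finset M)
  have ha0c0 : a0 ≠ c0 := fun e => hc0 (by rw [Finset.mem_singleton]; exact e.symm)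
  obtain ⟨b0, hb0n, hInd0⟩ := L3 a0 {c0} (Finset.singleton_nonempty c0)
  have hb0a : b0 ≠ a0 := fun e => hb0n (by simp [e])
  have hb0c : b0 ≠ c0 := fun e => hb0n (by simp [e])
  -- key: every independent triple realizes the same 3-edge bit
  have key : ∀ a b c : M, a ≠ b → a ≠ c → b ≠ c → Ind {a} {b} {c} → (T a b c ↔ T a0 b0 c0) := by
    intro a b c hab hac hbc hind
    obtain ⟨g, hg, hg1, hg2⟩ := ext2 T hTG ultra a0 c0 a c ha0c0 hac
    have hinv := hS.inv {a0} {b0} {c0} (Finset.singleton_nonempty _) (Finset.singleton_nonempty _)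
      (Finset.singleton_nonempty _) g hg hInd0
    rw [pimg_single, pimg_single, pimg_single, hg1, hg2] at hinv
    have hb'a : g b0 ≠ a := fun e => hb0a (g.injective (e.trans hg1.symm))
    have hb'c : g b0 ≠ c := fun e => hb0c (g.injective (e.trans hg2.symm))
    have hTb' : T a (g b0) c ↔ T a0 b0 c0 := by
      have h1 := hg a0 b0 c0
      rw [hg1, hg2] at h1
      exact h1
    obtain ⟨g', hg', hg'1, hg'2⟩ := ext2 T hTG ultra a b a (g b0) hab hb'a.symm
    obtain ⟨h, hh, hhfix, hhb⟩ := hS.staLeft {a} {b} {g b0} {c} (Finset.singleton_nonempty _)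
      (Finset.singleton_nonempty _) (Finset.singleton_nonempty _) (Finset.singleton_nonempty _)
      hind hinv g' hg'
      (by intro x hx; rw [Finset.mem_singleton] at hx; subst hx; exact hg'1)
      (by rw [pimg_single, hg'2])
    have hha : h a = a := hhfix a (Finset.mem_union_left _ (by simp))
    have hhc : h c = c := hhfix c (Finset.mem_union_right _ (by simp))
    have hhb' : h b = g b0 := (hhb b (by simp)).trans hg'2
    have h2 := hh a b c
    rw [hha, hhb', hhc] at h2
    exact h2.symm.trans hTb'
  -- triples of both kinds exist
  have hTfull : ∃ x y z : M, x ≠ y ∧ x ≠ z ∧ y ≠ z ∧ T x y z := by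
    obtain ⟨f, hfinj, hf⟩ := univ 3 (fun a b c => a ≠ b ∧ a ≠ c ∧ b ≠ c)
      ⟨fun a b c h => ⟨h.1.symm, h.2.2, h.2.1⟩, fun a b c h => ⟨h.2.1, h.1, h.2.2.symm⟩,
        fun a b c h => h, by
          intro a b c d hab hac had hbc hbd hcd
          exfalso
          have h1 : (a : ℕ) ≠ b := fun e => hab (Fin.ext e)
          have h2 : (a : ℕ) ≠ c := fun e => hac (Fin.ext e)
          have h3 : (a : ℕ) ≠ d := fun e => had (Fin.ext e)
          have h4 : (b : ℕ) ≠ c := fun e => hbc (Fin.ext e)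
          have h5 : (b : ℕ) ≠ d := fun e => hbd (Fin.ext e)
          have h6 : (c : ℕ) ≠ d := fun e => hcd (Fin.ext e)
          have := a.isLt; have := b.isLt; have := c.isLt; have := d.isLt
          omega⟩
    exact ⟨f 0, f 1, f 2, fun e => (by decide : (0 : Fin 3) ≠ 1) (hfinj e),
      fun e => (by decide : (0 : Fin 3) ≠ 2) (hfinj e),
      fun e => (by decide : (1 : Fin 3) ≠ 2) (hfinj e),
      (hf 0 1 2).mp (by decide)⟩
  have hTempty : ∃ x y z : M, x ≠ y ∧ x ≠ z ∧ y ≠ z ∧ ¬ T x y z := by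
    obtain ⟨f, hfinj, hf⟩ := univ 3 (fun _ _ _ => False)
      ⟨fun _ _ _ h => h.elim, fun _ _ _ h => h.elim, fun _ _ _ h => h.elim, by
        intro a b c d _ _ _ _ _ _; norm_num⟩
    exact ⟨f 0, f 1, f 2, fun e => (by decide : (0 : Fin 3) ≠ 1) (hfinj e),
      fun e => (by decide : (0 : Fin 3) ≠ 2) (hfinj e),
      fun e => (by decide : (1 : Fin 3) ≠ 2) (hfinj e),
      fun ht => (hf 0 1 2).mpr ht⟩
  obtain ⟨a, c, d, hac, had, hcd, hacd⟩ :
      ∃ x y z : M, x ≠ y ∧ x ≠ z ∧ y ≠ z ∧ (T x y z ↔ ¬ T a0 b0 c0) := by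
    by_cases h0 : T a0 b0 c0
    · obtain ⟨x, y, z, h1, h2, h3, h4⟩ := hTempty
      exact ⟨x, y, z, h1, h2, h3, iff_of_false h4 (not_not_intro h0)⟩
    · obtain ⟨x, y, z, h1, h2, h3, h4⟩ := hTfull
      exact ⟨x, y, z, h1, h2, h3, iff_of_true h4 h0⟩
  -- route 1 : b1 independent from {c,d} over a
  obtain ⟨b1, hb1n, hInd1⟩ := L3 a {c, d} ⟨c, by simp⟩
  have hb1a : b1 ≠ a := fun e => hb1n (by simp [e])
  have hb1c : b1 ≠ c := fun e => hb1n (by simp [e])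
  have hb1d : b1 ≠ d := fun e => hb1n (by simp [e])
  have hmon1 := hS.monRight {a} {b1} {c} {d} (Finset.singleton_nonempty _)
    (Finset.singleton_nonempty _) (Finset.singleton_nonempty _) (Finset.singleton_nonempty _)
    (by rw [← Finset.insert_eq]; exact hInd1)
  have hmon1' := hS.monRight {a} {b1} {d} {c} (Finset.singleton_nonempty _)
    (Finset.singleton_nonempty _) (Finset.singleton_nonempty _) (Finset.singleton_nonempty _)
    (by rw [← Finset.insert_eq, Finset.pair_comm d c]; exact hInd1)
  have hT1c : T a b1 c ↔ T a0 b0 c0 := key a b1 c hb1a.symm hac hb1c hmon1.1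
  have hT1d : T a b1 d ↔ T a0 b0 c0 := key a b1 d hb1a.symm had hb1d hmon1'.1
  -- route 2 : b2 independent from {a,d} over c
  obtain ⟨b2, hb2n, hInd2⟩ := L3 c {a, d} ⟨a, by simp⟩
  have hb2c : b2 ≠ c := fun e => hb2n (by simp [e])
  have hb2a : b2 ≠ a := fun e => hb2n (by simp [e])
  have hb2d : b2 ≠ d := fun e => hb2n (by simp [e])
  have hmon2 := hS.monRight {c} {b2} {a} {d} (Finset.singleton_nonempty _)
    (Finset.singleton_nonempty _) (Finset.singleton_nonempty _) (Finset.singleton_nonempty _)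
    (by rw [← Finset.insert_eq]; exact hInd2)
  have hmon2' := hS.monRight {c} {b2} {d} {a} (Finset.singleton_nonempty _)
    (Finset.singleton_nonempty _) (Finset.singleton_nonempty _) (Finset.singleton_nonempty _)
    (by rw [← Finset.insert_eq, Finset.pair_comm d a]; exact hInd2)
  have hT2a : T c b2 a ↔ T a0 b0 c0 := key c b2 a hb2c.symm hac.symm hb2a hmon2.1
  have hT2d : T c b2 d ↔ T a0 b0 c0 := key c b2 d hb2c.symm hcd hb2d hmon2'.1
  have hT2a' : T a b2 c ↔ T a0 b0 c0 :=
    ((s12 a b2 c).trans ((s23 b2 a c).trans (s12 b2 c a))).trans hT2a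
  have hiff3 : T a c b1 ↔ T a c b2 :=
    (s23 a c b1).trans (hT1c.trans (hT2a'.symm.trans (s23 a b2 c)))
  obtain ⟨g2, hg2, hg2a, hg2c, hg2b⟩ := ext3 T hTG ultra a c b1 a c b2 hac hb1a.symm hb1c.symm
    hac hb2a.symm hb2c.symm hiff3
  have hInd2'' : Ind ({a} ∪ {c}) {b2} {d} := by
    have h3 := hmon2.2
    rwa [Finset.union_comm] at h3
  obtain ⟨h, hh, hhfix, hhb⟩ := hS.staLeft ({a} ∪ {c}) {b1} {b2} {d} ⟨a, by simp⟩
    (Finset.singleton_nonempty _) (Finset.singleton_nonempty _) (Finset.singleton_nonempty _)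
    hmon1.2 hInd2'' g2 hg2
    (by
      intro x hx
      rcases Finset.mem_union.mp hx with hx | hx <;> rw [Finset.mem_singleton] at hx <;> subst hx
      · exact hg2a
      · exact hg2c)
    (by rw [pimg_single, hg2b])
  have hha : h a = a := hhfix a (Finset.mem_union_left _ (Finset.mem_union_left _ (by simp)))
  have hhd : h d = d := hhfix d (Finset.mem_union_right _ (by simp))
  have hhb1 : h b1 = b2 := (hhb b1 (by simp)).trans hg2b
  have hT1d' : T a b2 d ↔ T a0 b0 c0 := by
    have h4 := hh a b1 d
    rw [hha, hhb1, hhd] at h4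
    exact h4.trans hT1d
  have hacb2 : T a c b2 ↔ T a0 b0 c0 := (s23 a c b2).trans hT2a'
  have heven := hTG.even4 a c b2 d hac hb2a.symm had hb2c.symm hcd hb2d
  by_cases h0 : T a0 b0 c0
  · rw [if_pos (hacb2.mpr h0), if_neg (fun hh' => (hacd.mp hh') h0), if_pos (hT1d'.mpr h0),
      if_pos (hT2d.mpr h0)] at heven
    obtain ⟨r, hr⟩ := heven
    omega
  · rw [if_neg (fun hh' => h0 (hacb2.mp hh')), if_pos (hacd.mpr h0),
      if_neg (fun hh' => h0 (hT1d'.mp hh')), if_neg (fun hh' => h0 (hT2d.mp hh'))] at heven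
    obtain ⟨r, hr⟩ := heven
    omega


end Stmt7
end

section
/- Let k ≥ 1 and let n = 2(2k+1). Let (T, R) be an n-hypertournament with T infinite. Then (T, R) has no automorphism τ with τ ∘ τ = id and τ ≠ id; that is, the automorphism group of (T, R) contains no involutions. -/
/-!
If an automorphism `τ` maps an `n`-element set onto itself, it acts there as a permutation
that must be even. An involution `τ ≠ id` of an infinite set has either infinitely many fixed
points or infinitely many disjoint 2-cycles. In the first case one 2-cycle together with
`n - 2` fixed points, in the second case `n / 2 = 2k + 1` disjoint 2-cycles, form a
`τ`-invariant `n`-set on which `τ` is a product of an odd number of transpositions.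
-/

namespace Stmt8

/-- `(T, R)` is an `n`-hypertournament: every `n`-element subset has automorphism group
equal to the alternating group.  Concretely: for every injective `v : Fin n → T` and every
permutation `σ` of `Fin n`, `σ` "preserves the structure induced on the image of `v`"
(i.e. `R (v ∘ σ ∘ f) ↔ R (v ∘ f)` for every map `f : Fin n → Fin n`) if and only if `σ`
is an even permutation. -/
def IsHypertournament (n : ℕ) {T : Type*} (R : (Fin n → T) → Prop) : Prop :=
  ∀ v : Fin n → T, Function.Injective v → ∀ σ : Equiv.Perm (Fin n),
    ((∀ f : Fin n → Fin n, R (v ∘ σ ∘ f) ↔ R (v ∘ f)) ↔ Equiv.Perm.sign σ = 1)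

open Function Equiv

section Involution

variable {T : Type*} {τ : T → T}

theorem exists_injective_fin_of_infinite {s : Set T} (hs : s.Infinite) (m : ℕ) :
    ∃ p : Fin m → T, Injective p ∧ ∀ i, p i ∈ s :=
  ⟨fun i => hs.natEmbedding s i,
    Subtype.val_injective.comp ((hs.natEmbedding s).injective.comp Fin.val_injective),
    fun i => (hs.natEmbedding s i).2⟩

/-- The points lying `WellOrderingRel`-below their image form an infinite set meeting each
2-cycle once. -/
theorem exists_disjoint_two_cycles (hτ : Involutive τ)
    (hmoved : (fixedPoints τ)ᶜ.Infinite) (m : ℕ) :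
    ∃ p : Fin m → T, Injective p ∧ ∀ i j, τ (p i) ≠ p j := by
  set A := {x | WellOrderingRel x (τ x)}
  have hA : A.Infinite := by
    refine fun hfin => hmoved ((hfin.union (hfin.image τ)).subset fun x hx => ?_)
    rcases trichotomous_of WellOrderingRel x (τ x) with h | h | h
    · exact Or.inl h
    · exact absurd h.symm hx
    · exact Or.inr ⟨τ x, show WellOrderingRel (τ x) (τ (τ x)) by rwa [hτ x], hτ x⟩
  obtain ⟨p, hp, hpA⟩ := exists_injective_fin_of_infinite hA m
  refine ⟨p, hp, fun i j hij => asymm (r := WellOrderingRel) (hpA i) ?_⟩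
  have hj : WellOrderingRel (p j) (τ (p j)) := hpA j
  rwa [← hij, hτ (p i)] at hj

end Involution

section Hypertournament

variable {n : ℕ} {T : Type*} {R : (Fin n → T) → Prop} {τ : T → T}

theorem IsHypertournament.sign_eq_one_of_semiconj (hR : IsHypertournament n R)
    (hτ : ∀ t : Fin n → T, R (τ ∘ t) ↔ R t) {ι : Type*} [Fintype ι] [DecidableEq ι]
    (hι : Fintype.card ι = n) {w : ι → T} (hw : Injective w) {π : Perm ι}
    (hπ : Semiconj w π τ) : Perm.sign π = 1 := by
  set e := Fintype.equivFinOfCardEq hι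
  rw [← Perm.sign_permCongr e]
  refine (hR (w ∘ e.symm) (hw.comp e.symm.injective) _).mp fun f => ?_
  have hv : (w ∘ e.symm) ∘ e.permCongr π ∘ f = τ ∘ (w ∘ e.symm) ∘ f := by
    funext x
    simp only [comp_apply, permCongr_apply, symm_apply_apply, hπ.eq]
  rw [hv, hτ]

theorem IsHypertournament.even_of_two_cycles_of_fixed (hR : IsHypertournament n R)
    (hτ : ∀ t : Fin n → T, R (τ ∘ t) ↔ R t) (hinv : Involutive τ) {m r : ℕ}
    (hmr : 2 * m + r = n) {p : Fin m → T} (hp : Injective p) (hpτ : ∀ i j, τ (p i) ≠ p j)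
    {q : Fin r → T} (hq : Injective q) (hqτ : ∀ j, τ (q j) = q j) : Even m := by
  set w : Fin m × Bool ⊕ Fin r → T := Sum.elim (fun x => bif x.2 then τ (p x.1) else p x.1) q
  have hw : Injective w := by
    refine Injective.sumElim ?_ hq ?_
    · rintro ⟨i, _ | _⟩ ⟨j, _ | _⟩ h <;> simp only [cond_false, cond_true] at h
      · rw [hp h]
      · exact absurd h.symm (hpτ j i)
      · exact absurd h (hpτ i j)
      · rw [hp (hinv.injective h)]
    · rintro ⟨i, _ | _⟩ j h <;> simp only [cond_false, cond_true] at h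
      · exact hpτ i i (by rw [h, hqτ])
      · exact hpτ i i (h.trans ((hqτ j).symm.trans (by rw [← h, hinv])))
  set π : Perm (Fin m × Bool ⊕ Fin r) := Perm.sumCongr (prodCongrRight fun _ => boolNot) 1
  have hπ : Semiconj w π τ := by
    rintro (⟨i, _ | _⟩ | j)
    · rfl
    · exact (hinv (p i)).symm
    · exact (hqτ j).symm
  have hsign := hR.sign_eq_one_of_semiconj hτ (by simp [← hmr, mul_comm]) hw hπ
  rw [Perm.sign_sumCongr, Perm.sign_prodCongrRight] at hsign
  simpa [show Perm.sign boolNot = -1 by decide, neg_one_pow_eq_one_iff_even] using hsign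

end Hypertournament

theorem hypertournament_no_involutions_general {k : ℕ} {T : Type*} [Infinite T]
    (R : (Fin (2 * (2 * k + 1)) → T) → Prop)
    (hR : IsHypertournament (2 * (2 * k + 1)) R) :
    ¬ ∃ τ : T → T, Function.Bijective τ ∧
        (∀ t : Fin (2 * (2 * k + 1)) → T, R (τ ∘ t) ↔ R t) ∧ τ ∘ τ = id ∧ τ ≠ id := by
  rintro ⟨τ, -, hτ, hττ, hne⟩
  have hinv : Involutive τ := congrFun hττ
  rcases Set.infinite_union.mp (Set.union_compl_self (fixedPoints τ) ▸ Set.infinite_univ) with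
    hfixed | hmoved
  · obtain ⟨a, ha⟩ : ∃ a, τ a ≠ a := by simpa [funext_iff] using hne
    obtain ⟨q, hq, hqτ⟩ := exists_injective_fin_of_infinite hfixed (2 * (2 * k + 1) - 2)
    have := hR.even_of_two_cycles_of_fixed hτ hinv (m := 1) (by omega)
      (p := fun _ => a) (injective_of_subsingleton _) (fun _ _ => ha) hq hqτ
    exact Nat.not_even_one this
  · obtain ⟨p, hp, hpτ⟩ := exists_disjoint_two_cycles hinv hmoved (2 * k + 1)
    have := hR.even_of_two_cycles_of_fixed hτ hinv (r := 0) rfl hp hpτ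
      (q := Fin.elim0) (fun i => i.elim0) (fun i => i.elim0)
    exact Nat.not_even_two_mul_add_one k this

/-- for `k ≥ 1` and `n = 2(2k+1)`, an infinite `n`-hypertournament has no
involutions in its automorphism group. -/
theorem hypertournament_no_involutions {k : ℕ} (hk : 1 ≤ k) {T : Type*} [Infinite T]
    (R : (Fin (2 * (2 * k + 1)) → T) → Prop)
    (hR : IsHypertournament (2 * (2 * k + 1)) R) :
    ¬ ∃ τ : T → T, Function.Bijective τ ∧
        (∀ t : Fin (2 * (2 * k + 1)) → T, R (τ ∘ t) ↔ R t) ∧ τ ∘ τ = id ∧ τ ≠ id :=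
  hypertournament_no_involutions_general R hR

end Stmt8
end

section
/- Let M be a set with a binary relation E and a ternary relation D satisfying: (a) for all x, y, z, D(x,y,z) implies D(x,z,y); (b) for all x, y, z, D(x,y,z) implies both ¬D(y,z,x) and ¬D(z,x,y); (c) for every u and all pairwise distinct x, y, z, if E(u,x), E(u,y) and E(u,z) then D(x,y,z) or D(y,z,x) or D(z,x,y); (d) for all u, w there exists v with E(u,v) and E(v,w). Then every automorphism τ of M with τ ∘ τ ∘ τ = id which has a fixed point is the identity; equivalently, automorphisms of M of order 3 have no fixed points. -/
namespace Stmt10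

/-- let `M` carry a binary relation `E` and a ternary relation `D`
satisfying (a)-(d).  Then every automorphism `τ` of `M` with `τ ∘ τ ∘ τ = id` which has
a fixed point is the identity. -/
theorem order_three_auto_no_fixed_points {M : Type*}
    (E : M → M → Prop) (D : M → M → M → Prop)
    (ha : ∀ x y z, D x y z → D x z y)
    (hb : ∀ x y z, D x y z → ¬ D y z x ∧ ¬ D z x y)
    (hc : ∀ u x y z, x ≠ y → x ≠ z → y ≠ z → E u x → E u y → E u z →
      D x y z ∨ D y z x ∨ D z x y)
    (hd : ∀ u w, ∃ v, E u v ∧ E v w) :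
    ∀ τ : Equiv.Perm M, (∀ x y : M, E (τ x) (τ y) ↔ E x y) →
      (∀ x y z : M, D (τ x) (τ y) (τ z) ↔ D x y z) →
      ⇑τ ∘ ⇑τ ∘ ⇑τ = id → (∃ x, τ x = x) → τ = 1 := by
  rintro τ hE hD h3 ⟨p, hp⟩
  have h3' : ∀ x, τ (τ (τ x)) = x := fun x => congrFun h3 x
  have key : ∀ u x, E u x → E u (τ x) → E u (τ (τ x)) → τ x = x := by
    intro u x h1 h2 h3x
    by_contra hne
    have d1 : x ≠ τ x := fun h => hne h.symm
    have d2 : x ≠ τ (τ x) := by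
      intro h
      apply hne
      have := h3' x
      rw [← h] at this
      exact this
    have d3 : τ x ≠ τ (τ x) := fun h => hne (τ.injective h).symm
    rcases hc u x (τ x) (τ (τ x)) d1 d2 d3 h1 h2 h3x with h | h | h
    · have h' := (hD x (τ x) (τ (τ x))).mpr h
      rw [h3' x] at h'
      exact (hb x (τ x) (τ (τ x)) h).1 h'
    · have h' := (hD (τ x) (τ (τ x)) x).mpr h
      rw [h3' x] at h'
      exact (hb (τ x) (τ (τ x)) x h).1 h'
    · have h' := (hD (τ (τ x)) x (τ x)).mpr h
      rw [h3' x] at h'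
      exact (hb (τ (τ x)) x (τ x) h).1 h'
  ext x
  obtain ⟨v, hv1, hv2⟩ := hd p x
  have e2 : E p (τ v) := by
    have := (hE p v).mpr hv1
    rwa [hp] at this
  have e3 : E p (τ (τ v)) := by
    have := (hE p (τ v)).mpr e2
    rwa [hp] at this
  have hv : τ v = v := key p v hv1 e2 e3
  have f2 : E v (τ x) := by
    have := (hE v x).mpr hv2
    rwa [hv] at this
  have f3 : E v (τ (τ x)) := by
    have := (hE v (τ x)).mpr f2
    rwa [hv] at this
  exact key v x hv2 f2 f3

end Stmt10
end

section
/- Let M be a countable set with a binary relation E and a ternary relation D satisfying: (a) for all x, y, z, D(x,y,z) implies D(x,z,y); (b) for all x, y, z, D(x,y,z) implies both ¬D(y,z,x) and ¬D(z,x,y); (c) for every u and all pairwise distinct x, y, z, if E(u,x), E(u,y) and E(u,z) then D(x,y,z) or D(y,z,x) or D(z,x,y); (d) for all u, w there exists v with E(u,v) and E(v,w). Then there is no injective group homomorphism from the direct product of countably many copies of ℤ/3ℤ (the group of all functions ℕ → ℤ/3ℤ under pointwise addition) into the group of automorphisms of M. -/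
namespace Stmt11

/-- let `M` be a countable set carrying a binary relation `E` and a ternary
relation `D` satisfying (a)-(d).  Then there is no injective group homomorphism from the
direct product of countably many copies of `ℤ/3ℤ` into the automorphism group of `M`. -/
theorem no_embedding_of_C3_power {M : Type*} [Countable M]
    (E : M → M → Prop) (D : M → M → M → Prop)
    (ha : ∀ x y z, D x y z → D x z y)
    (hb : ∀ x y z, D x y z → ¬ D y z x ∧ ¬ D z x y)
    (hc : ∀ u x y z, x ≠ y → x ≠ z → y ≠ z → E u x → E u y → E u z →
      D x y z ∨ D y z x ∨ D z x y)
    (hd : ∀ u w, ∃ v, E u v ∧ E v w) :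
    ¬ ∃ Φ : (ℕ → ZMod 3) → Equiv.Perm M,
        Function.Injective Φ ∧
        (∀ a : ℕ → ZMod 3, (∀ x y : M, E (Φ a x) (Φ a y) ↔ E x y) ∧
          (∀ x y z : M, D (Φ a x) (Φ a y) (Φ a z) ↔ D x y z)) ∧
        (∀ a b : ℕ → ZMod 3, Φ (a + b) = Φ a * Φ b) := by
  rintro ⟨Φ, hinj, hpres, hmul⟩
  -- Φ 0 = 1
  have h0 : Φ 0 = 1 := by
    have h := hmul 0 0
    rw [add_zero] at h
    have : Φ 0 * 1 = Φ 0 * Φ 0 := by rw [mul_one]; exact h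
    exact (mul_left_cancel this).symm
  -- every element has order dividing 3
  have h3 : ∀ (a : ℕ → ZMod 3) (x : M), Φ a (Φ a (Φ a x)) = x := by
    intro a x
    have haaa : a + a + a = 0 := by
      funext n
      have : ∀ t : ZMod 3, t + t + t = 0 := by decide
      exact this (a n)
    have : Φ a * Φ a * Φ a = 1 := by
      rw [← hmul a a, ← hmul (a + a) a, haaa, h0]
    calc Φ a (Φ a (Φ a x)) = (Φ a * Φ a * Φ a) x := rfl
      _ = x := by rw [this]; rfl
  -- key: if Φ a fixes u, it fixes every E-neighbor of u
  have key : ∀ (a : ℕ → ZMod 3) (u v : M), Φ a u = u → E u v → Φ a v = v := by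
    intro a u v hu huv
    by_contra hne
    set τ : M → M := fun x => Φ a x with hτ
    have h12 : τ v ≠ τ (τ v) := fun h => hne ((Φ a).injective h).symm
    have h02 : v ≠ τ (τ v) := by
      intro h
      apply hne
      have h' : τ v = τ (τ (τ v)) := congrArg τ h
      rw [show τ (τ (τ v)) = v from h3 a v] at h'
      exact h'
    have hE1 : E u (τ v) := by
      have := (hpres a).1 u v
      rw [hu] at this
      exact this.mpr huv
    have hE2 : E u (τ (τ v)) := by
      have := (hpres a).1 u (τ v)
      rw [hu] at this
      exact this.mpr hE1
    -- apply (c)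
    have hdisj := hc u v (τ v) (τ (τ v)) (fun h => hne h.symm) h02 h12 huv hE1 hE2
    rcases hdisj with h | h | h
    · have h' : D (τ v) (τ (τ v)) v := by
        have := ((hpres a).2 v (τ v) (τ (τ v))).mpr h
        rwa [show Φ a (τ (τ v)) = v from h3 a v] at this
      exact (hb _ _ _ h).1 h'
    · have h' : D (τ (τ v)) v (τ v) := by
        have := ((hpres a).2 (τ v) (τ (τ v)) v).mpr h
        rwa [show Φ a (τ (τ v)) = v from h3 a v] at this
      exact (hb _ _ _ h).1 h'
    · have h' : D v (τ v) (τ (τ v)) := by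
        have := ((hpres a).2 (τ (τ v)) v (τ v)).mpr h
        rwa [show Φ a (τ (τ v)) = v from h3 a v] at this
      exact (hb _ _ _ h).1 h'
  -- stabilizers are trivial
  have stab : ∀ (a : ℕ → ZMod 3) (x : M), Φ a x = x → a = 0 := by
    intro a x hx
    apply hinj
    rw [h0]
    ext w
    obtain ⟨v, hxv, hvw⟩ := hd x w
    exact key a v w (key a x v hx hxv) hvw
  -- M must be nonempty
  rcases isEmpty_or_nonempty M with hM | hM
  · have : (0 : ℕ → ZMod 3) = 1 := by
      apply hinj
      ext x
      exact absurd ⟨x⟩ (not_nonempty_iff.mpr hM)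
    have := congrFun this 0
    simp at this
  · obtain ⟨x⟩ := hM
    have hF : Function.Injective (fun a : ℕ → ZMod 3 => Φ a x) := by
      intro a b hab
      have hfix : Φ (a - b) (Φ b x) = Φ b x := by
        have : Φ (a - b) * Φ b = Φ a := by rw [← hmul, sub_add_cancel]
        calc Φ (a - b) (Φ b x) = (Φ (a - b) * Φ b) x := rfl
          _ = Φ a x := by rw [this]
          _ = Φ b x := hab
      have := stab (a - b) (Φ b x) hfix
      exact sub_eq_zero.mp this
    have hC : Countable (ℕ → ZMod 3) := Function.Injective.countable hF
    obtain ⟨f, hf⟩ := exists_surjective_nat (ℕ → ZMod 3)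
    obtain ⟨m, hm⟩ := hf (fun n => f n n + 1)
    have := congrFun hm m
    have h13 : ∀ t : ZMod 3, t + 1 ≠ t := by decide
    exact h13 (f m m) this.symm

end Stmt11
end

section
/- Let β be the betweenness relation on ℚ, defined by β(a,b,c) if and only if (a < b and b < c) or (c < b and b < a). Then (ℚ, β) does not have a local SWIR: there is no ternary relation on the nonempty finite subsets of ℚ satisfying (Inv), (Ex), (Sta) and (Mon) with respect to automorphisms of (ℚ, β). -/
namespace Stmt12

open scoped Classical

variable {M : Type*}

/-- The permutation `g` fixes the finite set `A` pointwise. -/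
def Fixes (g : Equiv.Perm M) (A : Finset M) : Prop := ∀ a ∈ A, g a = a

/-- The image `g(A)` of a finite set under a permutation. -/
def pimg (g : Equiv.Perm M) (A : Finset M) : Finset M := A.map g.toEmbedding

/-- `B ≡_A B'` : some automorphism (with respect to the predicate `Auto`) fixes `A`
pointwise and maps `B` onto `B'`. -/
def EquivOver (Auto : Equiv.Perm M → Prop) (A B B' : Finset M) : Prop :=
  ∃ g : Equiv.Perm M, Auto g ∧ Fixes g A ∧ pimg g B = B'

/-- A local SWIR: a ternary relation `Ind` on the nonempty finite subsets of `M`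
(`Ind A B C` is read `B ⫫_A C`) satisfying (Inv), (Ex), (Sta) and (Mon) with respect to
the automorphisms of `M` (the permutations satisfying `Auto`). -/
structure IsLocalSWIR (Auto : Equiv.Perm M → Prop)
    (Ind : Finset M → Finset M → Finset M → Prop) : Prop where
  inv : ∀ A B C : Finset M, A.Nonempty → B.Nonempty → C.Nonempty →
    ∀ g : Equiv.Perm M, Auto g → Ind A B C → Ind (pimg g A) (pimg g B) (pimg g C)
  exLeft : ∀ A B C : Finset M, A.Nonempty → B.Nonempty → C.Nonempty →
    ∃ B' : Finset M, EquivOver Auto A B B' ∧ Ind A B' C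
  exRight : ∀ A B C : Finset M, A.Nonempty → B.Nonempty → C.Nonempty →
    ∃ C' : Finset M, EquivOver Auto A C C' ∧ Ind A B C'
  staLeft : ∀ A B B' C : Finset M, A.Nonempty → B.Nonempty → B'.Nonempty → C.Nonempty →
    Ind A B C → Ind A B' C →
    ∀ g : Equiv.Perm M, Auto g → Fixes g A → pimg g B = B' →
      ∃ h : Equiv.Perm M, Auto h ∧ Fixes h (A ∪ C) ∧ ∀ b ∈ B, h b = g b
  staRight : ∀ A B C C' : Finset M, A.Nonempty → B.Nonempty → C.Nonempty → C'.Nonempty →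
    Ind A B C → Ind A B C' →
    ∀ g : Equiv.Perm M, Auto g → Fixes g A → pimg g C = C' →
      ∃ h : Equiv.Perm M, Auto h ∧ Fixes h (A ∪ B) ∧ ∀ c ∈ C, h c = g c
  monLeft : ∀ A B C D : Finset M, A.Nonempty → B.Nonempty → C.Nonempty → D.Nonempty →
    Ind A (B ∪ D) C → Ind A B C ∧ Ind (A ∪ B) D C
  monRight : ∀ A B C D : Finset M, A.Nonempty → B.Nonempty → C.Nonempty → D.Nonempty →
    Ind A B (C ∪ D) → Ind A B C ∧ Ind (A ∪ C) B D

/-- The betweenness relation on `ℚ`. -/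
def beta (a b c : ℚ) : Prop := (a < b ∧ b < c) ∨ (c < b ∧ b < a)

/-- Automorphisms of `(ℚ, β)`. -/
def AutoBeta (g : Equiv.Perm ℚ) : Prop :=
  ∀ a b c : ℚ, beta (g a) (g b) (g c) ↔ beta a b c

lemma autoBeta_neg : AutoBeta (Equiv.neg ℚ) := by
  intro a b c
  simp only [Equiv.neg_apply, beta, neg_lt_neg_iff]
  tauto

/-- An automorphism of betweenness fixing `0` and a nonzero point `b` cannot swap `-1` and `1`. -/
lemma no_swap (h : Equiv.Perm ℚ) (hA : AutoBeta h) (b : ℚ) (hb0 : b ≠ 0)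
    (h0 : h 0 = 0) (hbb : h b = b) (hm : h (-1) = 1) (hp : h 1 = -1) : False := by
  have hb1 : b ≠ 1 := by rintro rfl; rw [hp] at hbb; norm_num at hbb
  have hbm1 : b ≠ -1 := by rintro rfl; rw [hm] at hbb; norm_num at hbb
  rcases lt_trichotomy b 0 with hneg | hz | hpos
  · rcases lt_trichotomy b (-1) with hlt | heq | hgt
    · -- b < -1 : beta b (-1) 0 holds, image beta b 1 0 fails
      have := (hA b (-1) 0).mpr (Or.inl ⟨by linarith, by norm_num⟩)
      rw [hbb, hm, h0] at this
      rcases this with ⟨_, H⟩ | ⟨_, H⟩ <;> linarith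
    · exact hbm1 heq
    · -- -1 < b < 0 : beta (-1) b 0 holds, image beta 1 b 0 fails
      have := (hA (-1) b 0).mpr (Or.inl ⟨hgt, hneg⟩)
      rw [hbb, hm, h0] at this
      rcases this with ⟨H1, H2⟩ | ⟨H1, H2⟩ <;> linarith
  · exact hb0 hz
  · rcases lt_trichotomy b 1 with hlt | heq | hgt
    · -- 0 < b < 1 : beta 0 b 1 holds, image beta 0 b (-1) fails
      have := (hA 0 b 1).mpr (Or.inl ⟨hpos, hlt⟩)
      rw [hbb, hp, h0] at this
      rcases this with ⟨H1, H2⟩ | ⟨H1, H2⟩ <;> linarith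
    · exact hb1 heq
    · -- b > 1 : beta 0 1 b holds, image beta 0 (-1) b fails
      have := (hA 0 1 b).mpr (Or.inl ⟨by norm_num, hgt⟩)
      rw [hbb, hp, h0] at this
      rcases this with ⟨H1, H2⟩ | ⟨H1, H2⟩ <;> linarith

/-- the betweenness structure `(ℚ, β)` does not have a local SWIR. -/
theorem qq_betweenness_no_localSWIR :
    ¬ ∃ Ind : Finset ℚ → Finset ℚ → Finset ℚ → Prop, IsLocalSWIR AutoBeta Ind := by
  rintro ⟨Ind, hS⟩
  set A : Finset ℚ := {0} with hAdef
  set C : Finset ℚ := {-1, 1} with hCdef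
  have hAne : A.Nonempty := Finset.singleton_nonempty _
  have hCne : C.Nonempty := Finset.insert_nonempty _ _
  obtain ⟨B', ⟨g, hAg, hgfix, hgimg⟩, hInd⟩ :=
    hS.exLeft A {1} C hAne (Finset.singleton_nonempty _) hCne
  have hB' : B' = {g 1} := by
    rw [← hgimg]; simp [pimg]
  have hg0 : g 0 = 0 := hgfix 0 (Finset.mem_singleton_self 0)
  have hb0 : g 1 ≠ 0 := by
    intro h
    have : g 1 = g 0 := by rw [h, hg0]
    exact one_ne_zero (g.injective this)
  have hB'ne : B'.Nonempty := by rw [hB']; exact Finset.singleton_nonempty _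
  -- negation fixes A and maps C to C
  have hnfix : Fixes (Equiv.neg ℚ) A := by
    intro a ha
    rw [Finset.mem_singleton] at ha
    subst ha; simp
  have hnC : pimg (Equiv.neg ℚ) C = C := by
    ext x
    simp only [pimg, Finset.mem_map, Equiv.coe_toEmbedding, Equiv.neg_apply, hCdef,
      Finset.mem_insert, Finset.mem_singleton]
    constructor
    · rintro ⟨a, (rfl | rfl), rfl⟩ <;> norm_num
    · rintro (rfl | rfl)
      · exact ⟨1, by norm_num⟩
      · exact ⟨-1, by norm_num⟩
  obtain ⟨h, hAh, hhfix, hhC⟩ :=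
    hS.staRight A B' C C hAne hB'ne hCne hCne hInd hInd (Equiv.neg ℚ) autoBeta_neg hnfix hnC
  have h0 : h 0 = 0 := hhfix 0 (by simp [hAdef])
  have hbb : h (g 1) = g 1 := hhfix (g 1) (by simp [hB'])
  have hm : h (-1) = 1 := by
    have := hhC (-1) (by simp [hCdef])
    simpa using this
  have hp : h 1 = -1 := by
    have := hhC 1 (by simp [hCdef])
    simpa using this
  exact no_swap h hAh (g 1) hb0 h0 hbb hm hp

end Stmt12
end

section
/- Let γ be the circular order on ℚ, defined by γ(a,b,c) if and only if (a < b and b < c) or (b < c and c < a) or (c < a and a < b). Then (ℚ, γ) has a local SWIR: there exists a ternary relation on the nonempty finite subsets of ℚ satisfying (Inv), (Ex), (Sta) and (Mon) with respect to automorphisms of (ℚ, γ). -/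
/-!
Take `B ⫫_A C` to mean that every `c ∈ C ∖ A` is separated from every `b ∈ B ∖ A` by a point of
`A`, i.e. `γ(c, a, b)` for some `a ∈ A`. (Inv) and (Mon) hold for separation by any ternary
relation. For the other two axioms, cut the circle at some `a₀ ∈ A`: `x ↦ (a₀ - x)⁻¹` turns
`ℚ ∖ {a₀}` with the order `γ(a₀, x, y)` into a countable dense linear order without endpoints,
whose order automorphisms extend to `γ`-automorphisms fixing `a₀`. In this order, `B ⫫_A C`
says that within each interval cut out by `A`, the points of `B` lie strictly below those of
`C`. By back-and-forth, every finite strictly monotone partial map extends to such an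
automorphism. So (Ex) comes down to pushing `B` down inside its intervals. (Sta) comes down to
checking that `g` on `B`, glued with the identity on `A ∪ C`, is strictly monotone, and that is
where the two independences come in.
-/

namespace Stmt13

open scoped Classical

variable {M : Type*}

/-- The permutation `g` fixes the finite set `A` pointwise. -/
def Fixes (g : Equiv.Perm M) (A : Finset M) : Prop := ∀ a ∈ A, g a = a

/-- The image `g(A)` of a finite set under a permutation. -/
def pimg (g : Equiv.Perm M) (A : Finset M) : Finset M := A.map g.toEmbedding

/-- `B ≡_A B'` : some automorphism (with respect to the predicate `Auto`) fixes `A`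
pointwise and maps `B` onto `B'`. -/
def EquivOver (Auto : Equiv.Perm M → Prop) (A B B' : Finset M) : Prop :=
  ∃ g : Equiv.Perm M, Auto g ∧ Fixes g A ∧ pimg g B = B'

/-- A local SWIR: a ternary relation `Ind` on the nonempty finite subsets of `M`
(`Ind A B C` is read `B ⫫_A C`) satisfying (Inv), (Ex), (Sta) and (Mon) with respect to
the automorphisms of `M` (the permutations satisfying `Auto`). -/
structure IsLocalSWIR (Auto : Equiv.Perm M → Prop)
    (Ind : Finset M → Finset M → Finset M → Prop) : Prop where
  inv : ∀ A B C : Finset M, A.Nonempty → B.Nonempty → C.Nonempty →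
    ∀ g : Equiv.Perm M, Auto g → Ind A B C → Ind (pimg g A) (pimg g B) (pimg g C)
  exLeft : ∀ A B C : Finset M, A.Nonempty → B.Nonempty → C.Nonempty →
    ∃ B' : Finset M, EquivOver Auto A B B' ∧ Ind A B' C
  exRight : ∀ A B C : Finset M, A.Nonempty → B.Nonempty → C.Nonempty →
    ∃ C' : Finset M, EquivOver Auto A C C' ∧ Ind A B C'
  staLeft : ∀ A B B' C : Finset M, A.Nonempty → B.Nonempty → B'.Nonempty → C.Nonempty →
    Ind A B C → Ind A B' C →
    ∀ g : Equiv.Perm M, Auto g → Fixes g A → pimg g B = B' →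
      ∃ h : Equiv.Perm M, Auto h ∧ Fixes h (A ∪ C) ∧ ∀ b ∈ B, h b = g b
  staRight : ∀ A B C C' : Finset M, A.Nonempty → B.Nonempty → C.Nonempty → C'.Nonempty →
    Ind A B C → Ind A B C' →
    ∀ g : Equiv.Perm M, Auto g → Fixes g A → pimg g C = C' →
      ∃ h : Equiv.Perm M, Auto h ∧ Fixes h (A ∪ B) ∧ ∀ c ∈ C, h c = g c
  monLeft : ∀ A B C D : Finset M, A.Nonempty → B.Nonempty → C.Nonempty → D.Nonempty →
    Ind A (B ∪ D) C → Ind A B C ∧ Ind (A ∪ B) D C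
  monRight : ∀ A B C D : Finset M, A.Nonempty → B.Nonempty → C.Nonempty → D.Nonempty →
    Ind A B (C ∪ D) → Ind A B C ∧ Ind (A ∪ C) B D

/-- The circular order on `ℚ`. -/
def gamma (a b c : ℚ) : Prop := (a < b ∧ b < c) ∨ (b < c ∧ c < a) ∨ (c < a ∧ a < b)

/-- Automorphisms of `(ℚ, γ)`. -/
def AutoGamma (g : Equiv.Perm ℚ) : Prop :=
  ∀ a b c : ℚ, gamma (g a) (g b) (g c) ↔ gamma a b c

theorem mem_pimg {g : Equiv.Perm M} {s : Finset M} {x : M} : x ∈ pimg g s ↔ ∃ y ∈ s, g y = x :=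
  Finset.mem_map

theorem pimg_inv_pimg (g : Equiv.Perm M) (s : Finset M) : pimg g⁻¹ (pimg g s) = s := by
  ext x; simp [mem_pimg]

theorem Fixes.union [DecidableEq M] {g : Equiv.Perm M} {A B : Finset M} (hA : Fixes g A)
    (hB : Fixes g B) : Fixes g (A ∪ B) := fun x hx =>
  (Finset.mem_union.1 hx).elim (hA x) (hB x)

theorem Fixes.inv {g : Equiv.Perm M} {A : Finset M} (h : Fixes g A) : Fixes g⁻¹ A := fun a ha => by
  rw [Equiv.Perm.inv_eq_iff_eq, h a ha]

theorem Fixes.pimg_eq {g : Equiv.Perm M} {A : Finset M} (h : Fixes g A) : pimg g A = A := by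
  ext x
  rw [mem_pimg]
  constructor
  · rintro ⟨y, hy, rfl⟩
    rwa [h y hy]
  · exact fun hx => ⟨x, hx, h x hx⟩

def SepInd (R : M → M → M → Prop) (A B C : Finset M) : Prop :=
  ∀ b ∈ B, b ∉ A → ∀ c ∈ C, c ∉ A → ∃ a ∈ A, R c a b

namespace SepInd

variable {R : M → M → M → Prop} {A B C D : Finset M}

theorem pimg {g : Equiv.Perm M} (hg : ∀ x y z, R (g x) (g y) (g z) ↔ R x y z)
    (h : SepInd R A B C) : SepInd R (pimg g A) (pimg g B) (pimg g C) := by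
  intro _ hgb hbA _ hgc hcA
  obtain ⟨b, hb, rfl⟩ := mem_pimg.1 hgb
  obtain ⟨c, hc, rfl⟩ := mem_pimg.1 hgc
  obtain ⟨a, ha, hcab⟩ :=
    h b hb (fun h => hbA (mem_pimg.2 ⟨b, h, rfl⟩)) c hc (fun h => hcA (mem_pimg.2 ⟨c, h, rfl⟩))
  exact ⟨g a, mem_pimg.2 ⟨a, ha, rfl⟩, (hg c a b).2 hcab⟩

theorem of_union_left [DecidableEq M] (h : SepInd R A (B ∪ D) C) :
    SepInd R A B C ∧ SepInd R (A ∪ B) D C := by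
  refine ⟨fun b hb => h b (Finset.mem_union_left _ hb), fun d hd hdA c hc hcA => ?_⟩
  simp only [Finset.mem_union, not_or] at hdA hcA
  obtain ⟨a, ha, hcad⟩ := h d (Finset.mem_union_right _ hd) hdA.1 c hc hcA.1
  exact ⟨a, Finset.mem_union_left _ ha, hcad⟩

theorem of_union_right [DecidableEq M] (h : SepInd R A B (C ∪ D)) :
    SepInd R A B C ∧ SepInd R (A ∪ C) B D := by
  refine ⟨fun b hb hbA c hc => h b hb hbA c (Finset.mem_union_left _ hc),
    fun b hb hbA d hd hdA => ?_⟩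
  simp only [Finset.mem_union, not_or] at hbA hdA
  obtain ⟨a, ha, hdab⟩ := h b hb hbA.1 d (Finset.mem_union_right _ hd) hdA.1
  exact ⟨a, Finset.mem_union_left _ ha, hdab⟩

end SepInd

section LinearOrder

variable {α : Type*} [LinearOrder α]

section BackAndForth

variable [Countable α] [DenselyOrdered α] [NoMinOrder α] [NoMaxOrder α] [Nonempty α]

/-- Cantor's back-and-forth argument, started from `p` instead of the empty partial isomorphism. -/
theorem exists_orderIso_extending (p : Order.PartialIso α α) :
    ∃ e : α ≃o α, ∀ q ∈ p.val, e q.1 = q.2 := by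
  classical
  cases nonempty_encodable α
  let toCofinal : α ⊕ α → Order.Cofinal (Order.PartialIso α α) := fun q ↦
    Sum.recOn q (Order.PartialIso.definedAtLeft α) (Order.PartialIso.definedAtRight α)
  let I : Order.Ideal (Order.PartialIso α α) := Order.idealOfCofinals p toCofinal
  let F a := Order.PartialIso.funOfIdeal a I
    (Order.cofinal_meets_idealOfCofinals _ toCofinal (Sum.inl a))
  let G b := Order.PartialIso.invOfIdeal b I
    (Order.cofinal_meets_idealOfCofinals _ toCofinal (Sum.inr b))
  refine ⟨OrderIso.ofCmpEqCmp (fun a ↦ (F a).val) (fun b ↦ (G b).val) fun a b ↦ ?_, ?_⟩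
  · obtain ⟨f, hf, ha⟩ := (F a).prop
    obtain ⟨g, hg, hb⟩ := (G b).prop
    obtain ⟨m, -, fm, gm⟩ := I.directed _ hf _ hg
    exact m.prop (a, _) (fm ha) (_, b) (gm hb)
  · intro q hq
    obtain ⟨f, hf, ha⟩ := (F q.1).prop
    obtain ⟨m, -, fm, pm⟩ := I.directed _ hf _ (Order.mem_idealOfCofinals p toCofinal)
    have := m.prop (q.1, (F q.1).val) (fm ha) q (pm hq)
    rw [cmp_self_eq_eq] at this
    exact (cmp_eq_eq_iff _ _).1 this.symm

theorem exists_orderIso_eqOn (S : Finset α) (f : α → α) (hf : StrictMonoOn f S) :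
    ∃ e : α ≃o α, ∀ x ∈ S, e x = f x := by
  classical
  have hcmp : ∀ p ∈ S.image (fun x => (x, f x)), ∀ q ∈ S.image (fun x => (x, f x)),
      cmp p.1 q.1 = cmp p.2 q.2 := by
    simp only [Finset.mem_image]
    rintro _ ⟨x, hx, rfl⟩ _ ⟨y, hy, rfl⟩
    exact (hf.cmp_map_eq hx hy).symm
  obtain ⟨e, he⟩ := exists_orderIso_extending ⟨_, hcmp⟩
  exact ⟨e, fun x hx => he (x, f x) (Finset.mem_image_of_mem _ hx)⟩

end BackAndForth

theorem lt_apply_iff_of_fixed {S : Set α} {f : α → α} (hf : StrictMonoOn f S) {a x : α}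
    (ha : a ∈ S) (hx : x ∈ S) (hfa : f a = a) : (a < f x ↔ a < x) ∧ (f x < a ↔ x < a) := by
  have h₁ := hf.lt_iff_lt ha hx
  have h₂ := hf.lt_iff_lt hx ha
  rw [hfa] at h₁ h₂
  exact ⟨h₁, h₂⟩

theorem strictMonoOn_update_insert {β : Type*} [LinearOrder β] {S : Set α} {f : α → β} {b : α}
    {w : β} (hf : StrictMonoOn f S) (hb : b ∉ S) (hlo : ∀ x ∈ S, x < b → f x < w)
    (hhi : ∀ x ∈ S, b < x → w < f x) : StrictMonoOn (Function.update f b w) (insert b S) := by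
  have hne : ∀ x ∈ S, x ≠ b := fun x hx h => hb (h ▸ hx)
  rintro x (rfl | hx) y (rfl | hy) hxy
  · exact absurd hxy (lt_irrefl _)
  · rw [Function.update_self, Function.update_of_ne (hne y hy)]; exact hhi y hy hxy
  · rw [Function.update_self, Function.update_of_ne (hne x hx)]; exact hlo x hx hxy
  · rw [Function.update_of_ne (hne x hx), Function.update_of_ne (hne y hy)]; exact hf hx hy hxy

theorem exists_strictMonoOn_piecewise {F G : Finset α} {g : α → α} (hg : StrictMonoOn g G)
    (hFG : ∀ x ∈ F, x ∈ G → g x = x)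
    (hlt : ∀ x ∈ G, ∀ y ∈ F, y ∉ G → x < y → g x < y)
    (hgt : ∀ x ∈ G, ∀ y ∈ F, y ∉ G → y < x → y < g x) :
    ∃ f : α → α, StrictMonoOn f ↑(F ∪ G) ∧ (∀ x ∈ F, f x = x) ∧ ∀ x ∈ G, f x = g x := by
  classical
  refine ⟨G.piecewise g id, fun x hx y hy hxy => ?_, fun x hx => ?_, fun x hx => ?_⟩
  · simp only [Finset.coe_union, Set.mem_union, Finset.mem_coe] at hx hy
    by_cases hxG : x ∈ G <;> by_cases hyG : y ∈ G <;>
      simp only [Finset.piecewise_eq_of_mem, Finset.piecewise_eq_of_notMem, hxG, hyG, id,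
        not_false_eq_true]
    · exact hg hxG hyG hxy
    · exact hlt x hxG y (hy.resolve_right hyG) hyG hxy
    · exact hgt y hyG x (hx.resolve_right hxG) hxG hxy
    · exact hxy
  · by_cases hxG : x ∈ G
    · rw [Finset.piecewise_eq_of_mem _ _ _ hxG, hFG x hx hxG]
    · rw [Finset.piecewise_eq_of_notMem _ _ _ hxG, id]
  · exact Finset.piecewise_eq_of_mem _ _ _ hx

def LinInd (A B C : Finset α) : Prop :=
  ∀ b ∈ B, b ∉ A → ∀ c ∈ C, c ∉ A → c ≤ b → ∃ a ∈ A, c < a ∧ a < b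

namespace LinInd

variable {A B C : Finset α}

theorem mem_of_mem_of_mem (h : LinInd A B C) {x : α} (hB : x ∈ B) (hC : x ∈ C) : x ∈ A := by
  by_contra hA
  obtain ⟨a, -, hxa, hax⟩ := h x hB hA x hC hA le_rfl
  exact lt_asymm hxa hax

variable [DenselyOrdered α] [NoMinOrder α] [NoMaxOrder α]

/-- Where to send a new maximal point `b₀` of `B`, given a map `f` that already works for the
rest `s` of `B`. -/
theorem exists_target {s : Finset α} {b₀ : α} {f : α → α} (hs : ∀ t ∈ s, t < b₀)
    (hf : StrictMonoOn f ↑(A ∪ s)) (hfA : ∀ a ∈ A, f a = a) (hfC : LinInd A (s.image f) C) :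
    ∃ w, (∀ x ∈ A ∪ s, x < b₀ → f x < w) ∧ (∀ a ∈ A, b₀ < a → w < a) ∧
      ∀ c ∈ C, c ∉ A → c ≤ w → ∃ a ∈ A, c < a ∧ a < w := by
  classical
  have : Nonempty α := ⟨b₀⟩
  have hfix : ∀ a ∈ A, ∀ t ∈ s, (a < f t ↔ a < t) ∧ (f t < a ↔ t < a) := fun a ha t ht =>
    lt_apply_iff_of_fixed hf (Finset.mem_union_left _ ha) (Finset.mem_union_right _ ht) (hfA a ha)
  have hfs : ∀ t ∈ s, t ∉ A → f t ∉ A := fun t ht htA hftA =>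
    htA (hf.injOn (Finset.mem_union_left _ hftA) (Finset.mem_union_right _ ht) (hfA _ hftA) ▸ hftA)
  set lo := A.filter (· < b₀) ∪ s.image f
  set hi := A.filter (b₀ < ·) ∪ C.filter fun c => c ∉ A ∧ ∀ a ∈ A, a < b₀ → a < c
  have hlo_hi : ∀ x ∈ lo, ∀ y ∈ hi, x < y := by
    simp only [lo, hi, Finset.mem_union, Finset.mem_filter, Finset.mem_image]
    rintro x (⟨hxA, hx⟩ | ⟨t, ht, rfl⟩) y (⟨hyA, hy⟩ | ⟨hyC, hyA, hy⟩)
    · exact hx.trans hy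
    · exact hy x hxA hx
    · exact (hfix y hyA t ht).2.2 ((hs t ht).trans hy)
    · by_contra hyt
      by_cases htA : t ∈ A
      · exact hyt (by rw [hfA t htA]; exact hy t htA (hs t ht))
      obtain ⟨a, haA, hya, haf⟩ :=
        hfC _ (Finset.mem_image_of_mem f ht) (hfs t ht htA) y hyC hyA (not_lt.1 hyt)
      exact lt_asymm hya (hy a haA (((hfix a haA t ht).1.1 haf).trans (hs t ht)))
  obtain ⟨w, hlo, hhi⟩ := Order.exists_between_finsets lo hi hlo_hi
  refine ⟨w, fun x hx hxb => hlo _ ?_,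
    fun a ha hba => hhi a (Finset.mem_union_left _ (Finset.mem_filter.2 ⟨ha, hba⟩)),
    fun c hc hcA hcw => ?_⟩
  · rcases Finset.mem_union.1 hx with hxA | hxs
    · rw [hfA x hxA]
      exact Finset.mem_union_left _ (Finset.mem_filter.2 ⟨hxA, hxb⟩)
    · exact Finset.mem_union_right _ (Finset.mem_image_of_mem f hxs)
  · by_cases hsep : ∀ a ∈ A, a < b₀ → a < c
    · exact absurd (hhi c (Finset.mem_union_right _ (Finset.mem_filter.2 ⟨hc, hcA, hsep⟩)))
        (not_lt.2 hcw)
    push Not at hsep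
    obtain ⟨a, ha, hab, hca⟩ := hsep
    exact ⟨a, ha, lt_of_le_of_ne hca fun h => hcA (h ▸ ha),
      hlo a (Finset.mem_union_left _ (Finset.mem_filter.2 ⟨ha, hab⟩))⟩

theorem exists_image_insert {s : Finset α} {b₀ : α} {f : α → α} (hs : ∀ t ∈ s, t < b₀)
    (hb₀ : b₀ ∉ A) (hf : StrictMonoOn f ↑(A ∪ s)) (hfA : ∀ a ∈ A, f a = a)
    (hfC : LinInd A (s.image f) C) :
    ∃ f' : α → α, StrictMonoOn f' ↑(A ∪ insert b₀ s) ∧ (∀ a ∈ A, f' a = a) ∧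
      LinInd A ((insert b₀ s).image f') C := by
  classical
  obtain ⟨w, hlo, hhi, hsep⟩ := exists_target hs hf hfA hfC
  have hb₀s : b₀ ∉ A ∪ s := by
    simpa [hb₀] using fun h => lt_irrefl _ (hs b₀ h)
  have hne : ∀ x ∈ A ∪ s, x ≠ b₀ := fun x hx h => hb₀s (h ▸ hx)
  refine ⟨Function.update f b₀ w, ?_, fun a ha => ?_, ?_⟩
  · rw [Finset.union_insert, Finset.coe_insert]
    refine strictMonoOn_update_insert hf hb₀s hlo fun x hx hbx => ?_
    have hxA : x ∈ A := (Finset.mem_union.1 hx).resolve_right fun hxs => lt_asymm hbx (hs x hxs)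
    rw [hfA x hxA]
    exact hhi x hxA hbx
  · rw [Function.update_of_ne (hne a (Finset.mem_union_left _ ha)), hfA a ha]
  · rw [Finset.image_insert, Function.update_self,
      Finset.image_congr fun t ht => Function.update_of_ne (hne t (Finset.mem_union_right _ ht)) _ _]
    intro b hb hbA c hc hcA hcb
    rcases Finset.mem_insert.1 hb with rfl | hb
    · exact hsep c hc hcA hcb
    · exact hfC b hb hbA c hc hcA hcb

theorem exists_image (A B C : Finset α) :
    ∃ f : α → α, StrictMonoOn f ↑(A ∪ B) ∧ (∀ a ∈ A, f a = a) ∧ LinInd A (B.image f) C := by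
  classical
  induction B using Finset.induction_on_max with
  | empty => exact ⟨id, by simpa using strictMonoOn_id, fun _ _ => rfl, by simp [LinInd]⟩
  | insert b₀ s hs ih =>
    obtain ⟨f, hf, hfA, hfC⟩ := ih
    by_cases hb₀ : b₀ ∈ A
    · refine ⟨f, ?_, hfA, ?_⟩
      · rwa [Finset.union_insert, Finset.insert_eq_of_mem (Finset.mem_union_left _ hb₀)]
      rw [Finset.image_insert, hfA b₀ hb₀]
      intro b hb hbA
      exact hfC b ((Finset.mem_insert.1 hb).resolve_left fun h => hbA (h ▸ hb₀)) hbA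
    exact exists_image_insert hs hb₀ hf hfA hfC

end LinInd

theorem LinInd.exists_strictMonoOn_left {A B C : Finset α} {g : α → α} (hg : StrictMono g)
    (hgA : ∀ a ∈ A, g a = a) (h₁ : LinInd A B C) (h₂ : LinInd A (B.image g) C) :
    ∃ f : α → α, StrictMonoOn f ↑(A ∪ C ∪ B) ∧ (∀ x ∈ A ∪ C, f x = x) ∧ ∀ x ∈ B, f x = g x := by
  have hfix : ∀ a ∈ A, ∀ x, (a < g x ↔ a < x) ∧ (g x < a ↔ x < a) := fun a ha x =>
    lt_apply_iff_of_fixed (hg.strictMonoOn Set.univ) trivial trivial (hgA a ha)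
  refine exists_strictMonoOn_piecewise (hg.strictMonoOn _) (fun x hx hxB => hgA x ?_) ?_ ?_
  · exact (Finset.mem_union.1 hx).elim id (h₁.mem_of_mem_of_mem hxB)
  · intro x hxB y hy _ hxy
    by_cases hyA : y ∈ A
    · exact (hfix y hyA x).2.2 hxy
    have hyC := (Finset.mem_union.1 hy).resolve_left hyA
    by_cases hxA : x ∈ A
    · rwa [hgA x hxA]
    by_contra hyx
    obtain ⟨a, ha, hya, hax⟩ := h₂ _ (Finset.mem_image_of_mem g hxB)
      (fun h => hxA (hg.injective (hgA _ h) ▸ h)) y hyC hyA (not_lt.1 hyx)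
    exact lt_asymm ((hfix a ha x).1.1 hax) (hxy.trans hya)
  · intro x hxB y hy _ hyx
    by_cases hyA : y ∈ A
    · exact (hfix y hyA x).1.2 hyx
    have hyC := (Finset.mem_union.1 hy).resolve_left hyA
    by_cases hxA : x ∈ A
    · rwa [hgA x hxA]
    obtain ⟨a, ha, hya, hax⟩ := h₁ x hxB hxA y hyC hyA hyx.le
    exact hya.trans ((hfix a ha x).1.2 hax)

theorem LinInd.exists_strictMonoOn_right {A B C : Finset α} {g : α → α} (hg : StrictMono g)
    (hgA : ∀ a ∈ A, g a = a) (h₁ : LinInd A B C) (h₂ : LinInd A B (C.image g)) :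
    ∃ f : α → α, StrictMonoOn f ↑(A ∪ B ∪ C) ∧ (∀ x ∈ A ∪ B, f x = x) ∧ ∀ x ∈ C, f x = g x := by
  have hfix : ∀ a ∈ A, ∀ x, (a < g x ↔ a < x) ∧ (g x < a ↔ x < a) := fun a ha x =>
    lt_apply_iff_of_fixed (hg.strictMonoOn Set.univ) trivial trivial (hgA a ha)
  refine exists_strictMonoOn_piecewise (hg.strictMonoOn _) (fun x hx hxC => hgA x ?_) ?_ ?_
  · exact (Finset.mem_union.1 hx).elim id fun hxB => h₁.mem_of_mem_of_mem hxB hxC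
  · intro x hxC y hy _ hxy
    by_cases hyA : y ∈ A
    · exact (hfix y hyA x).2.2 hxy
    have hyB := (Finset.mem_union.1 hy).resolve_left hyA
    by_cases hxA : x ∈ A
    · rwa [hgA x hxA]
    obtain ⟨a, ha, hxa, hay⟩ := h₁ y hyB hyA x hxC hxA hxy.le
    exact ((hfix a ha x).2.2 hxa).trans hay
  · intro x hxC y hy _ hyx
    by_cases hyA : y ∈ A
    · exact (hfix y hyA x).1.2 hyx
    have hyB := (Finset.mem_union.1 hy).resolve_left hyA
    by_cases hxA : x ∈ A
    · rwa [hgA x hxA]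
    by_contra hxy
    obtain ⟨a, ha, hxa, hay⟩ := h₂ y hyB hyA _ (Finset.mem_image_of_mem g hxC)
      (fun h => hxA (hg.injective (hgA _ h) ▸ h)) (not_lt.1 hxy)
    exact lt_asymm ((hfix a ha x).2.1 hxa) (hay.trans hyx)

end LinearOrder

theorem gamma_iff_mul_pos {a b c : ℚ} : gamma a b c ↔ 0 < (a - b) * (b - c) * (c - a) := by
  unfold gamma
  constructor
  · rintro (⟨h₁, h₂⟩ | ⟨h₁, h₂⟩ | ⟨h₁, h₂⟩) <;> nlinarith [mul_pos (sub_pos.2 h₁) (sub_pos.2 h₂)]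
  · intro h
    have hab : a ≠ b := by rintro rfl; simp at h
    have hbc : b ≠ c := by rintro rfl; simp at h
    rcases hab.lt_or_gt with hab | hab <;> rcases hbc.lt_or_gt with hbc | hbc <;>
      rcases lt_or_ge c a with hca | hca <;>
      first | tauto | nlinarith [mul_pos (sub_pos.2 hab) (sub_pos.2 hbc)]

theorem gamma_rotate {a b c : ℚ} : gamma a b c ↔ gamma b c a := by
  unfold gamma; tauto

theorem not_gamma_self_left (a b : ℚ) : ¬ gamma a a b := by simp [gamma_iff_mul_pos]

theorem not_gamma_self_right (a b : ℚ) : ¬ gamma a b a := by simp [gamma_iff_mul_pos]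

theorem gamma_congr {a b c a' b' c' : ℚ} (hab : a < b ↔ a' < b') (hbc : b < c ↔ b' < c')
    (hca : c < a ↔ c' < a') : gamma a b c ↔ gamma a' b' c' := by
  unfold gamma; rw [hab, hbc, hca]

theorem AutoGamma.inv {g : Equiv.Perm ℚ} (hg : AutoGamma g) : AutoGamma g⁻¹ := fun a b c => by
  rw [← hg]; simp

/-- Cutting the circle at `a₀`: `x ↦ (a₀ - x)⁻¹` maps `ℚ ∖ {a₀}`, read along the circular order
starting just after `a₀`, increasingly onto `ℚ ∖ {0}` (and `a₀` itself to `0⁻¹ = 0`). -/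
def cutKey (a₀ x : ℚ) : ℚ := (a₀ - x)⁻¹

theorem cutKey_injective (a₀ : ℚ) : Function.Injective (cutKey a₀) :=
  inv_injective.comp (sub_right_injective (b := a₀))

theorem cutKey_sub_cutKey {a₀ x y : ℚ} (hx : x ≠ a₀) (hy : y ≠ a₀) :
    cutKey a₀ x - cutKey a₀ y = (x - y) / ((a₀ - x) * (a₀ - y)) := by
  have : a₀ - x ≠ 0 := sub_ne_zero.2 hx.symm
  have : a₀ - y ≠ 0 := sub_ne_zero.2 hy.symm
  unfold cutKey; field_simp; ring

theorem cutKey_lt_cutKey_iff {a₀ x y : ℚ} (hx : x ≠ a₀) (hy : y ≠ a₀) :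
    cutKey a₀ x < cutKey a₀ y ↔ gamma a₀ x y := by
  rw [← sub_pos, cutKey_sub_cutKey hy hx, div_pos_iff, ← mul_pos_iff, gamma_iff_mul_pos]
  constructor <;> intro h <;> linarith

theorem gamma_cutKey_iff {a₀ x y z : ℚ} (hx : x ≠ a₀) (hy : y ≠ a₀) (hz : z ≠ a₀) :
    gamma (cutKey a₀ x) (cutKey a₀ y) (cutKey a₀ z) ↔ gamma x y z := by
  have hx' : a₀ - x ≠ 0 := sub_ne_zero.2 hx.symm
  have hy' : a₀ - y ≠ 0 := sub_ne_zero.2 hy.symm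
  have hz' : a₀ - z ≠ 0 := sub_ne_zero.2 hz.symm
  rw [gamma_iff_mul_pos, gamma_iff_mul_pos, cutKey_sub_cutKey hx hy, cutKey_sub_cutKey hy hz,
    cutKey_sub_cutKey hz hx]
  have : (x - y) / ((a₀ - x) * (a₀ - y)) * ((y - z) / ((a₀ - y) * (a₀ - z))) *
      ((z - x) / ((a₀ - z) * (a₀ - x))) =
      (x - y) * (y - z) * (z - x) / ((a₀ - x) * (a₀ - y) * (a₀ - z)) ^ 2 := by
    field_simp
  rw [this, div_pos_iff_of_pos_right (by positivity)]

theorem autoGamma_of_cut {g : Equiv.Perm ℚ} {a₀ : ℚ} (h₀ : g a₀ = a₀)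
    (hg : ∀ x y, x ≠ a₀ → y ≠ a₀ → (gamma a₀ (g x) (g y) ↔ gamma a₀ x y)) : AutoGamma g := by
  have hne : ∀ {x}, x ≠ a₀ → g x ≠ a₀ := fun hx h => hx (g.injective (h.trans h₀.symm))
  have base : ∀ y z, gamma a₀ (g y) (g z) ↔ gamma a₀ y z := by
    intro y z
    rcases eq_or_ne y a₀ with rfl | hy
    · simp only [h₀, not_gamma_self_left]
    rcases eq_or_ne z a₀ with rfl | hz
    · simp only [h₀, not_gamma_self_right]
    exact hg y z hy hz
  intro x y z
  rcases eq_or_ne x a₀ with hx | hx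
  · rw [hx, h₀]; exact base y z
  rcases eq_or_ne y a₀ with hy | hy
  · rw [hy, gamma_rotate, gamma_rotate (a := x), h₀]; exact base z x
  rcases eq_or_ne z a₀ with hz | hz
  · rw [hz, ← gamma_rotate (a := g a₀), ← gamma_rotate (a := a₀), h₀]; exact base x y
  have hcut : ∀ u v, u ≠ a₀ → v ≠ a₀ →
      (cutKey a₀ (g u) < cutKey a₀ (g v) ↔ cutKey a₀ u < cutKey a₀ v) := fun u v hu hv => by
    rw [cutKey_lt_cutKey_iff (hne hu) (hne hv), cutKey_lt_cutKey_iff hu hv, base]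
  rw [← gamma_cutKey_iff hx hy hz, ← gamma_cutKey_iff (hne hx) (hne hy) (hne hz)]
  exact gamma_congr (hcut x y hx hy) (hcut y z hy hz) (hcut z x hz hx)

structure CutAt (a₀ : ℚ) where
  val : ℚ
  ne : val ≠ a₀

namespace CutAt

variable {a₀ : ℚ}

theorem val_injective : Function.Injective (val : CutAt a₀ → ℚ) := by
  rintro ⟨x, hx⟩ ⟨y, hy⟩ rfl; rfl

instance : LinearOrder (CutAt a₀) :=
  LinearOrder.lift' (fun x => cutKey a₀ x.val) ((cutKey_injective a₀).comp val_injective)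

theorem lt_iff_cutKey_lt {x y : CutAt a₀} : x < y ↔ cutKey a₀ x.val < cutKey a₀ y.val := Iff.rfl

theorem lt_iff_gamma {x y : CutAt a₀} : x < y ↔ gamma a₀ x.val y.val :=
  cutKey_lt_cutKey_iff x.ne y.ne

theorem exists_cutKey_eq {q : ℚ} (hq : q ≠ 0) : ∃ z : CutAt a₀, cutKey a₀ z.val = q :=
  ⟨⟨a₀ - q⁻¹, by simpa using hq⟩, by simp [cutKey]⟩

instance : Countable (CutAt a₀) := val_injective.countable

instance : Nonempty (CutAt a₀) := ⟨⟨a₀ + 1, by simp⟩⟩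

instance : DenselyOrdered (CutAt a₀) where
  dense x y hxy := by
    obtain ⟨q, hxq, hqy⟩ := exists_between (lt_iff_cutKey_lt.1 hxy)
    obtain ⟨r, hr₀, hxr, hry⟩ : ∃ r : ℚ, r ≠ 0 ∧ cutKey a₀ x.val < r ∧ r < cutKey a₀ y.val := by
      rcases eq_or_ne q 0 with rfl | hq
      · obtain ⟨r, hxr, hr⟩ := exists_between hxq
        exact ⟨r, hr.ne, hxr, hr.trans hqy⟩
      · exact ⟨q, hq, hxq, hqy⟩
    obtain ⟨z, rfl⟩ := exists_cutKey_eq (a₀ := a₀) hr₀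
    exact ⟨z, hxr, hry⟩

instance : NoMaxOrder (CutAt a₀) where
  exists_gt x := by
    obtain ⟨z, hz⟩ := exists_cutKey_eq (a₀ := a₀) (q := |cutKey a₀ x.val| + 1) (by positivity)
    exact ⟨z, lt_iff_cutKey_lt.2 (by rw [hz]; linarith [le_abs_self (cutKey a₀ x.val)])⟩

instance : NoMinOrder (CutAt a₀) where
  exists_lt x := by
    obtain ⟨z, hz⟩ := exists_cutKey_eq (a₀ := a₀) (q := -(|cutKey a₀ x.val| + 1))
      (neg_ne_zero.2 (by positivity))
    exact ⟨z, lt_iff_cutKey_lt.2 (by rw [hz]; linarith [neg_abs_le (cutKey a₀ x.val)])⟩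

noncomputable def finset (a₀ : ℚ) (s : Finset ℚ) : Finset (CutAt a₀) :=
  s.preimage val val_injective.injOn

@[simp]
theorem mem_finset {s : Finset ℚ} {x : CutAt a₀} : x ∈ finset a₀ s ↔ x.val ∈ s :=
  Finset.mem_preimage

theorem finset_union (s t : Finset ℚ) : finset a₀ (s ∪ t) = finset a₀ s ∪ finset a₀ t := by
  ext; simp

theorem eqOn_of_finset {h g : ℚ → ℚ} {s : Finset ℚ} (h₀ : h a₀ = g a₀)
    (H : ∀ x ∈ finset a₀ s, h x.val = g x.val) : ∀ x ∈ s, h x = g x := fun x hx => by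
  by_cases hx₀ : x = a₀
  · rw [hx₀, h₀]
  · exact H ⟨x, hx₀⟩ (mem_finset.2 hx)

def restrict (g : Equiv.Perm ℚ) (hg : g a₀ = a₀) (x : CutAt a₀) : CutAt a₀ :=
  ⟨g x.val, fun h => x.ne (g.injective (h.trans hg.symm))⟩

theorem restrict_strictMono {g : Equiv.Perm ℚ} (hg : AutoGamma g) (h₀ : g a₀ = a₀) :
    StrictMono (restrict g h₀) := fun x y hxy => by
  rw [lt_iff_gamma] at hxy ⊢
  have := (hg a₀ x.val y.val).2 hxy
  rwa [h₀] at this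

theorem finset_pimg {g : Equiv.Perm ℚ} (h₀ : g a₀ = a₀) {s : Finset ℚ} {f : CutAt a₀ → CutAt a₀}
    (hf : ∀ x ∈ finset a₀ s, g x.val = (f x).val) :
    finset a₀ (pimg g s) = (finset a₀ s).image f := by
  ext y
  simp only [mem_finset, mem_pimg, Finset.mem_image]
  constructor
  · rintro ⟨x, hx, hxy⟩
    have hx₀ : x ≠ a₀ := fun h => y.ne (by rw [← hxy, h, h₀])
    exact ⟨⟨x, hx₀⟩, hx, val_injective ((hf ⟨x, hx₀⟩ (mem_finset.2 hx)).symm.trans hxy)⟩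
  · rintro ⟨x, hx, rfl⟩
    exact ⟨x.val, hx, hf x (mem_finset.2 hx)⟩

def extend (e : CutAt a₀ ≃o CutAt a₀) : Equiv.Perm ℚ where
  toFun x := if h : x = a₀ then a₀ else (e ⟨x, h⟩).val
  invFun x := if h : x = a₀ then a₀ else (e.symm ⟨x, h⟩).val
  left_inv x := by
    by_cases h : x = a₀
    · simp [h]
    · dsimp only
      rw [dif_neg h, dif_neg (e ⟨x, h⟩).ne]
      exact congrArg val (e.symm_apply_apply ⟨x, h⟩)
  right_inv x := by
    by_cases h : x = a₀
    · simp [h]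
    · dsimp only
      rw [dif_neg h, dif_neg (e.symm ⟨x, h⟩).ne]
      exact congrArg val (e.apply_symm_apply ⟨x, h⟩)

theorem extend_self (e : CutAt a₀ ≃o CutAt a₀) : extend e a₀ = a₀ := dif_pos rfl

theorem extend_val (e : CutAt a₀ ≃o CutAt a₀) (x : CutAt a₀) : extend e x.val = (e x).val :=
  dif_neg x.ne

theorem autoGamma_extend (e : CutAt a₀ ≃o CutAt a₀) : AutoGamma (extend e) :=
  autoGamma_of_cut (extend_self e) fun x y hx hy => by
    rw [extend_val e ⟨x, hx⟩, extend_val e ⟨y, hy⟩, ← lt_iff_gamma, e.lt_iff_lt, lt_iff_gamma]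

end CutAt

theorem exists_autoGamma_extending {a₀ : ℚ} (S : Finset (CutAt a₀)) (f : CutAt a₀ → CutAt a₀)
    (hf : StrictMonoOn f S) : ∃ g, AutoGamma g ∧ g a₀ = a₀ ∧ ∀ x ∈ S, g x.val = (f x).val := by
  obtain ⟨e, he⟩ := exists_orderIso_eqOn S f hf
  exact ⟨CutAt.extend e, CutAt.autoGamma_extend e, CutAt.extend_self e,
    fun x hx => by rw [CutAt.extend_val, he x hx]⟩

theorem exists_autoGamma_fixing_agreeing {a₀ : ℚ} {F G : Finset ℚ} {g : Equiv.Perm ℚ}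
    (h₀ : g a₀ = a₀) {f : CutAt a₀ → CutAt a₀}
    (hf : StrictMonoOn f ↑(CutAt.finset a₀ F ∪ CutAt.finset a₀ G))
    (hfF : ∀ x ∈ CutAt.finset a₀ F, f x = x)
    (hfG : ∀ x ∈ CutAt.finset a₀ G, f x = CutAt.restrict g h₀ x) :
    ∃ h, AutoGamma h ∧ (∀ x ∈ F, h x = x) ∧ ∀ x ∈ G, h x = g x := by
  obtain ⟨h, hh, hh₀, hS⟩ := exists_autoGamma_extending _ f hf
  refine ⟨h, hh, CutAt.eqOn_of_finset (g := id) hh₀ fun x hx => ?_,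
    CutAt.eqOn_of_finset (hh₀.trans h₀.symm) fun x hx => ?_⟩
  · rw [hS x (Finset.mem_union_left _ hx), hfF x hx]; rfl
  · rw [hS x (Finset.mem_union_right _ hx), hfG x hx]; rfl

theorem exists_gamma_iff_cut {a₀ : ℚ} {A : Finset ℚ} (ha₀ : a₀ ∈ A) (b c : CutAt a₀) :
    (∃ a ∈ A, gamma c.val a b.val) ↔ (c ≤ b → ∃ a ∈ CutAt.finset a₀ A, c < a ∧ a < b) := by
  constructor
  · rintro ⟨a, ha, hcab⟩ hcb
    by_cases ha₀' : a = a₀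
    · rw [ha₀'] at hcab
      exact absurd (CutAt.lt_iff_gamma.2 (gamma_rotate.1 hcab)) (not_lt.2 hcb)
    refine ⟨⟨a, ha₀'⟩, CutAt.mem_finset.2 ha, ?_⟩
    rcases (gamma_cutKey_iff c.ne ha₀' b.ne).2 hcab with h | ⟨-, h⟩ | ⟨h, -⟩
    · exact h
    all_goals exact absurd h (not_lt.2 hcb)
  · intro h
    rcases le_or_gt c b with hcb | hbc
    · obtain ⟨a, ha, hca, hab⟩ := h hcb
      exact ⟨a.val, CutAt.mem_finset.1 ha, (gamma_cutKey_iff c.ne a.ne b.ne).1 (Or.inl ⟨hca, hab⟩)⟩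
    · exact ⟨a₀, ha₀, gamma_rotate.2 (CutAt.lt_iff_gamma.1 hbc)⟩

theorem sepInd_gamma_iff_linInd {a₀ : ℚ} {A B C : Finset ℚ} (ha₀ : a₀ ∈ A) :
    SepInd gamma A B C ↔
      LinInd (CutAt.finset a₀ A) (CutAt.finset a₀ B) (CutAt.finset a₀ C) := by
  constructor
  · intro h b hb hbA c hc hcA
    rw [CutAt.mem_finset] at hb hbA hc hcA
    exact (exists_gamma_iff_cut ha₀ b c).1 (h _ hb hbA _ hc hcA)
  · intro h b hb hbA c hc hcA
    have hb₀ : b ≠ a₀ := fun h => hbA (h ▸ ha₀)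
    have hc₀ : c ≠ a₀ := fun h => hcA (h ▸ ha₀)
    exact (exists_gamma_iff_cut ha₀ ⟨b, hb₀⟩ ⟨c, hc₀⟩).2 (h ⟨b, hb₀⟩ (CutAt.mem_finset.2 hb)
      (mt CutAt.mem_finset.1 hbA) ⟨c, hc₀⟩ (CutAt.mem_finset.2 hc) (mt CutAt.mem_finset.1 hcA))

theorem exists_equivOver_sepInd_gamma_left {A : Finset ℚ} (hA : A.Nonempty) (B C : Finset ℚ) :
    ∃ B', EquivOver AutoGamma A B B' ∧ SepInd gamma A B' C := by
  obtain ⟨a₀, ha₀⟩ := hA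
  obtain ⟨f, hf, hfA, hfC⟩ :=
    LinInd.exists_image (CutAt.finset a₀ A) (CutAt.finset a₀ B) (CutAt.finset a₀ C)
  obtain ⟨g, hg, hg₀, hgf⟩ := exists_autoGamma_extending _ f hf
  have hgA : Fixes g A := CutAt.eqOn_of_finset (g := id) hg₀ fun x hx => by
    rw [hgf x (Finset.mem_union_left _ hx), hfA x hx]; rfl
  refine ⟨pimg g B, ⟨g, hg, hgA, rfl⟩, (sepInd_gamma_iff_linInd ha₀).2 ?_⟩
  rwa [CutAt.finset_pimg hg₀ fun x hx => hgf x (Finset.mem_union_right _ hx)]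

theorem exists_equivOver_sepInd_gamma_right {A : Finset ℚ} (hA : A.Nonempty) (B C : Finset ℚ) :
    ∃ C', EquivOver AutoGamma A C C' ∧ SepInd gamma A B C' := by
  obtain ⟨_, ⟨g, hg, hgA, rfl⟩, h⟩ := exists_equivOver_sepInd_gamma_left hA B C
  refine ⟨pimg g⁻¹ C, ⟨g⁻¹, hg.inv, hgA.inv, rfl⟩, ?_⟩
  simpa only [hgA.inv.pimg_eq, pimg_inv_pimg] using h.pimg hg.inv

theorem exists_autoGamma_of_sepInd_gamma_left {A B B' C : Finset ℚ} (hA : A.Nonempty)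
    (h₁ : SepInd gamma A B C) (h₂ : SepInd gamma A B' C) {g : Equiv.Perm ℚ} (hg : AutoGamma g)
    (hgA : Fixes g A) (hgB : pimg g B = B') :
    ∃ h, AutoGamma h ∧ Fixes h A ∧ Fixes h C ∧ ∀ b ∈ B, h b = g b := by
  obtain ⟨a₀, ha₀⟩ := hA
  have h₀ : g a₀ = a₀ := hgA a₀ ha₀
  subst hgB
  rw [sepInd_gamma_iff_linInd ha₀] at h₁ h₂
  rw [CutAt.finset_pimg h₀ (f := CutAt.restrict g h₀) fun _ _ => rfl] at h₂
  obtain ⟨f, hf, hfAC, hfB⟩ := LinInd.exists_strictMonoOn_left (CutAt.restrict_strictMono hg h₀)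
    (fun a ha => CutAt.val_injective (hgA _ (CutAt.mem_finset.1 ha))) h₁ h₂
  rw [← CutAt.finset_union] at hf hfAC
  obtain ⟨h, hh, hhAC, hhB⟩ := exists_autoGamma_fixing_agreeing h₀ hf hfAC hfB
  exact ⟨h, hh, fun a ha => hhAC a (Finset.mem_union_left _ ha),
    fun c hc => hhAC c (Finset.mem_union_right _ hc), hhB⟩

theorem exists_autoGamma_of_sepInd_gamma_right {A B C C' : Finset ℚ} (hA : A.Nonempty)
    (h₁ : SepInd gamma A B C) (h₂ : SepInd gamma A B C') {g : Equiv.Perm ℚ} (hg : AutoGamma g)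
    (hgA : Fixes g A) (hgC : pimg g C = C') :
    ∃ h, AutoGamma h ∧ Fixes h A ∧ Fixes h B ∧ ∀ c ∈ C, h c = g c := by
  obtain ⟨a₀, ha₀⟩ := hA
  have h₀ : g a₀ = a₀ := hgA a₀ ha₀
  subst hgC
  rw [sepInd_gamma_iff_linInd ha₀] at h₁ h₂
  rw [CutAt.finset_pimg h₀ (f := CutAt.restrict g h₀) fun _ _ => rfl] at h₂
  obtain ⟨f, hf, hfAB, hfC⟩ := LinInd.exists_strictMonoOn_right (CutAt.restrict_strictMono hg h₀)
    (fun a ha => CutAt.val_injective (hgA _ (CutAt.mem_finset.1 ha))) h₁ h₂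
  rw [← CutAt.finset_union] at hf hfAB
  obtain ⟨h, hh, hhAB, hhC⟩ := exists_autoGamma_fixing_agreeing h₀ hf hfAB hfC
  exact ⟨h, hh, fun a ha => hhAB a (Finset.mem_union_left _ ha),
    fun b hb => hhAB b (Finset.mem_union_right _ hb), hhC⟩

/-- the circular order `(ℚ, γ)` has a local SWIR. -/
theorem qq_circular_has_localSWIR :
    ∃ Ind : Finset ℚ → Finset ℚ → Finset ℚ → Prop, IsLocalSWIR AutoGamma Ind := by
  -- the unions in `IsLocalSWIR` are taken with the classical `DecidableEq` instance
  let _ : DecidableEq ℚ := fun a b => Classical.propDecidable (a = b)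
  refine ⟨SepInd gamma, fun _ _ _ _ _ _ _ hg h => h.pimg hg,
    fun _ _ _ hA _ _ => exists_equivOver_sepInd_gamma_left hA _ _,
    fun _ _ _ hA _ _ => exists_equivOver_sepInd_gamma_right hA _ _, ?_, ?_,
    fun _ _ _ _ _ _ _ _ h => h.of_union_left, fun _ _ _ _ _ _ _ _ h => h.of_union_right⟩
  · intro _ _ _ _ hA _ _ _ h₁ h₂ g hg hgA hgB
    obtain ⟨h, hh, hhA, hhC, hhB⟩ := exists_autoGamma_of_sepInd_gamma_left hA h₁ h₂ hg hgA hgB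
    exact ⟨h, hh, hhA.union hhC, hhB⟩
  · intro _ _ _ _ hA _ _ _ h₁ h₂ g hg hgA hgC
    obtain ⟨h, hh, hhA, hhB, hhC⟩ := exists_autoGamma_of_sepInd_gamma_right hA h₁ h₂ hg hgA hgC
    exact ⟨h, hh, hhA.union hhB, hhC⟩

end Stmt13
end

section
/- Let γ be the circular order on ℚ (γ(a,b,c) iff (a < b and b < c) or (b < c and c < a) or (c < a and a < b)), and let σ be the separation relation on ℚ, defined by σ(a,b;c,d) if and only if (γ(a,c,b) and γ(b,d,a)) or (γ(a,d,b) and γ(b,c,a)). Then (ℚ, σ) does not have a local SWIR: there is no ternary relation on the nonempty finite subsets of ℚ satisfying (Inv), (Ex), (Sta) and (Mon) with respect to automorphisms of (ℚ, σ). -/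
namespace Stmt14

open scoped Classical

variable {M : Type*}

/-- The permutation `g` fixes the finite set `A` pointwise. -/
def Fixes (g : Equiv.Perm M) (A : Finset M) : Prop := ∀ a ∈ A, g a = a

/-- The image `g(A)` of a finite set under a permutation. -/
def pimg (g : Equiv.Perm M) (A : Finset M) : Finset M := A.map g.toEmbedding

/-- `B ≡_A B'` : some automorphism (with respect to the predicate `Auto`) fixes `A`
pointwise and maps `B` onto `B'`. -/
def EquivOver (Auto : Equiv.Perm M → Prop) (A B B' : Finset M) : Prop :=
  ∃ g : Equiv.Perm M, Auto g ∧ Fixes g A ∧ pimg g B = B'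

/-- A local SWIR: a ternary relation `Ind` on the nonempty finite subsets of `M`
(`Ind A B C` is read `B ⫫_A C`) satisfying (Inv), (Ex), (Sta) and (Mon) with respect to
the automorphisms of `M` (the permutations satisfying `Auto`). -/
structure IsLocalSWIR (Auto : Equiv.Perm M → Prop)
    (Ind : Finset M → Finset M → Finset M → Prop) : Prop where
  inv : ∀ A B C : Finset M, A.Nonempty → B.Nonempty → C.Nonempty →
    ∀ g : Equiv.Perm M, Auto g → Ind A B C → Ind (pimg g A) (pimg g B) (pimg g C)
  exLeft : ∀ A B C : Finset M, A.Nonempty → B.Nonempty → C.Nonempty →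
    ∃ B' : Finset M, EquivOver Auto A B B' ∧ Ind A B' C
  exRight : ∀ A B C : Finset M, A.Nonempty → B.Nonempty → C.Nonempty →
    ∃ C' : Finset M, EquivOver Auto A C C' ∧ Ind A B C'
  staLeft : ∀ A B B' C : Finset M, A.Nonempty → B.Nonempty → B'.Nonempty → C.Nonempty →
    Ind A B C → Ind A B' C →
    ∀ g : Equiv.Perm M, Auto g → Fixes g A → pimg g B = B' →
      ∃ h : Equiv.Perm M, Auto h ∧ Fixes h (A ∪ C) ∧ ∀ b ∈ B, h b = g b
  staRight : ∀ A B C C' : Finset M, A.Nonempty → B.Nonempty → C.Nonempty → C'.Nonempty →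
    Ind A B C → Ind A B C' →
    ∀ g : Equiv.Perm M, Auto g → Fixes g A → pimg g C = C' →
      ∃ h : Equiv.Perm M, Auto h ∧ Fixes h (A ∪ B) ∧ ∀ c ∈ C, h c = g c
  monLeft : ∀ A B C D : Finset M, A.Nonempty → B.Nonempty → C.Nonempty → D.Nonempty →
    Ind A (B ∪ D) C → Ind A B C ∧ Ind (A ∪ B) D C
  monRight : ∀ A B C D : Finset M, A.Nonempty → B.Nonempty → C.Nonempty → D.Nonempty →
    Ind A B (C ∪ D) → Ind A B C ∧ Ind (A ∪ C) B D

/-- The circular order on `ℚ`. -/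
def gamma (a b c : ℚ) : Prop := (a < b ∧ b < c) ∨ (b < c ∧ c < a) ∨ (c < a ∧ a < b)

/-- The separation relation on `ℚ`. -/
def sep (a b c d : ℚ) : Prop := (gamma a c b ∧ gamma b d a) ∨ (gamma a d b ∧ gamma b c a)

/-- Automorphisms of `(ℚ, σ)`. -/
def AutoSep (g : Equiv.Perm ℚ) : Prop :=
  ∀ a b c d : ℚ, sep (g a) (g b) (g c) (g d) ↔ sep a b c d

lemma sep_in {x z w : ℚ} (h0 : 0 < w) (h1 : w < x) (hz : z < 0 ∨ x < z) : sep 0 x z w := by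
  refine Or.inr ⟨Or.inl ⟨h0, h1⟩, ?_⟩
  rcases hz with hz | hz
  · exact Or.inr (Or.inl ⟨hz, by linarith⟩)
  · exact Or.inr (Or.inr ⟨by linarith, hz⟩)

lemma sep_out {x z w : ℚ} (hx : 0 < x) (hw : w < 0 ∨ x < w) (hz : z < 0 ∨ x < z) :
    ¬ sep 0 x z w := by
  rintro (⟨h1, _⟩ | ⟨h1, _⟩)
  · rcases h1 with ⟨a, b⟩ | ⟨a, b⟩ | ⟨a, b⟩ <;> rcases hz with hz | hz <;> linarith
  · rcases h1 with ⟨a, b⟩ | ⟨a, b⟩ | ⟨a, b⟩ <;> rcases hw with hw | hw <;> linarith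

lemma gamma_neg (a b c : ℚ) : gamma (-a) (-b) (-c) ↔ gamma c b a := by
  simp only [gamma, neg_lt_neg_iff]
  constructor
  · rintro (⟨p, q⟩ | ⟨p, q⟩ | ⟨p, q⟩)
    · exact Or.inl ⟨q, p⟩
    · exact Or.inr (Or.inr ⟨q, p⟩)
    · exact Or.inr (Or.inl ⟨q, p⟩)
  · rintro (⟨p, q⟩ | ⟨p, q⟩ | ⟨p, q⟩)
    · exact Or.inl ⟨q, p⟩
    · exact Or.inr (Or.inr ⟨q, p⟩)
    · exact Or.inr (Or.inl ⟨q, p⟩)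

lemma sep_neg_iff (a b c d : ℚ) : sep (-a) (-b) (-c) (-d) ↔ sep a b c d := by
  simp only [sep, gamma_neg]
  constructor
  · rintro (⟨p, q⟩ | ⟨p, q⟩)
    · exact Or.inr ⟨q, p⟩
    · exact Or.inl ⟨q, p⟩
  · rintro (⟨p, q⟩ | ⟨p, q⟩)
    · exact Or.inr ⟨q, p⟩
    · exact Or.inl ⟨q, p⟩

lemma autoSep_neg : AutoSep (Equiv.neg ℚ) := by
  intro a b c d
  simpa using sep_neg_iff a b c d

def conjNeg (h : Equiv.Perm ℚ) : Equiv.Perm ℚ := (Equiv.neg ℚ).trans (h.trans (Equiv.neg ℚ))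

lemma conjNeg_apply (h : Equiv.Perm ℚ) (x : ℚ) : conjNeg h x = -(h (-x)) := rfl

lemma autoSep_conjNeg {h : Equiv.Perm ℚ} (hA : AutoSep h) : AutoSep (conjNeg h) := by
  intro a b c d
  rw [conjNeg_apply, conjNeg_apply, conjNeg_apply, conjNeg_apply,
    sep_neg_iff, hA, sep_neg_iff]

lemma excl_pos {h : Equiv.Perm ℚ} (hA : AutoSep h)
    (h0 : h 0 = 0) (h1 : h 1 = 1) (hm1 : h (-1) = -1) {u : ℚ}
    (hu : h u = -u) (h0u : 0 < u) (hu1 : u < 1) : False := by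
  have hiff := hA 0 1 (-1) u
  rw [h0, h1, hm1, hu] at hiff
  exact sep_out one_pos (Or.inl (by linarith)) (Or.inl (by norm_num))
    (hiff.mpr (sep_in h0u hu1 (Or.inl (by norm_num))))

lemma excl {h : Equiv.Perm ℚ} (hA : AutoSep h)
    (h0 : h 0 = 0) (h1 : h 1 = 1) (hm1 : h (-1) = -1) {u : ℚ}
    (hu : h u = -u) (hu0 : u ≠ 0) : 1 < u ∨ u < -1 := by
  by_contra hcon
  push_neg at hcon
  obtain ⟨hle1, hlem⟩ := hcon
  rcases lt_trichotomy u 0 with hneg | hz | hpos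
  · rcases eq_or_lt_of_le hlem with he | hm
    · rw [← he] at hu; rw [hm1] at hu; norm_num at hu
    · have hA' := autoSep_conjNeg hA
      exact excl_pos hA' (by rw [conjNeg_apply, neg_zero, h0, neg_zero])
        (by rw [conjNeg_apply, hm1]; norm_num) (by rw [conjNeg_apply, neg_neg, h1])
        (show conjNeg h (-u) = -(-u) by rw [conjNeg_apply, neg_neg, hu, neg_neg])
        (by linarith) (by linarith)
  · exact hu0 hz
  · rcases eq_or_lt_of_le hle1 with he | h1u
    · subst he; rw [h1] at hu; norm_num at hu
    · exact excl_pos hA h0 h1 hm1 hu hpos h1u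

lemma pos_case {h : Equiv.Perm ℚ} (hA : AutoSep h)
    (h0 : h 0 = 0) (h1 : h 1 = -1) {u v : ℚ}
    (hu : h u = u) (hv : h v = v)
    (h1u : 1 < u) (hvb : 1 < v ∨ v < -1) (huv : u ≠ v) : False := by
  have hiff := hA 0 u v 1
  rw [h0, hu, hv, h1] at hiff
  rcases hvb with hv1 | hv1
  · rcases lt_or_gt_of_ne huv with hlt | hlt
    · exact sep_out (by linarith) (Or.inl (by norm_num)) (Or.inr hlt)
        (hiff.mpr (sep_in one_pos h1u (Or.inr hlt)))
    · have hiff2 := hA 0 v u 1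
      rw [h0, hu, hv, h1] at hiff2
      exact sep_out (by linarith) (Or.inl (by norm_num)) (Or.inr hlt)
        (hiff2.mpr (sep_in one_pos hv1 (Or.inr hlt)))
  · exact sep_out (by linarith) (Or.inl (by norm_num)) (Or.inl (by linarith))
      (hiff.mpr (sep_in one_pos h1u (Or.inl (by linarith))))

lemma final {h : Equiv.Perm ℚ} (hA : AutoSep h)
    (h0 : h 0 = 0) (h1 : h 1 = -1) (hm1 : h (-1) = 1) {u v : ℚ}
    (hu : h u = u) (hv : h v = v) (huv : u ≠ v)
    (hub : 1 < u ∨ u < -1) (hvb : 1 < v ∨ v < -1) : False := by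
  rcases hub with hb | hb
  · exact pos_case hA h0 h1 hu hv hb hvb huv
  · rcases hvb with hb' | hb'
    · exact pos_case hA h0 h1 hv hu hb' (Or.inr hb) (Ne.symm huv)
    · have hA' := autoSep_conjNeg hA
      have c0 : conjNeg h 0 = 0 := by rw [conjNeg_apply, neg_zero, h0, neg_zero]
      have c1 : conjNeg h 1 = -1 := by rw [conjNeg_apply, hm1]
      have cu : conjNeg h (-u) = -u := by rw [conjNeg_apply, neg_neg, hu]
      have cv : conjNeg h (-v) = -v := by rw [conjNeg_apply, neg_neg, hv]
      exact pos_case hA' c0 c1 cu cv (by linarith) (Or.inl (by linarith))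
        (by intro e; exact huv (neg_inj.mp e))


/-- the separation structure `(ℚ, σ)` does not have a local SWIR. -/
theorem qq_separation_no_localSWIR :
    ¬ ∃ Ind : Finset ℚ → Finset ℚ → Finset ℚ → Prop, IsLocalSWIR AutoSep Ind := by
  rintro ⟨Ind, H⟩
  have hAne : ({0} : Finset ℚ).Nonempty := Finset.singleton_nonempty 0
  have hCne : ({-1, 1} : Finset ℚ).Nonempty := Finset.insert_nonempty _ _
  obtain ⟨B', ⟨g₀, hg₀auto, hg₀fix, hg₀img⟩, hInd⟩ :=
    H.exLeft {0} {-1, 1} {-1, 1} hAne hCne hCne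
  have hB' : B' = {g₀ (-1), g₀ 1} := by
    rw [← hg₀img]; simp [pimg, Finset.map_insert]
  set u := g₀ 1 with hu_def
  set v := g₀ (-1) with hv_def
  have huB : u ∈ B' := by rw [hB']; simp
  have hvB : v ∈ B' := by rw [hB']; simp
  have hB'ne : B'.Nonempty := ⟨u, huB⟩
  have hg00 : g₀ 0 = 0 := hg₀fix 0 (by simp)
  have hu0 : u ≠ 0 := by
    intro e; have := g₀.injective (e.trans hg00.symm); norm_num at this
  have hv0 : v ≠ 0 := by
    intro e; have := g₀.injective (e.trans hg00.symm); norm_num at this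
  have huv : u ≠ v := by
    intro e; have := g₀.injective e; norm_num at this
  have hnegfix : Fixes (Equiv.neg ℚ) ({0} : Finset ℚ) := by
    intro a ha
    simp only [Finset.mem_singleton] at ha
    subst ha; simp
  have hCfix : pimg (Equiv.neg ℚ) ({-1, 1} : Finset ℚ) = {-1, 1} := by
    ext x
    simp only [pimg, Finset.mem_map, Finset.mem_insert, Finset.mem_singleton,
      Equiv.coe_toEmbedding, Equiv.neg_apply]
    constructor
    · rintro ⟨a, (rfl | rfl), rfl⟩ <;> norm_num
    · rintro (rfl | rfl)
      · exact ⟨1, Or.inr rfl, by norm_num⟩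
      · exact ⟨-1, Or.inl rfl, by norm_num⟩
  have hInd2 : Ind {0} (pimg (Equiv.neg ℚ) B') {-1, 1} := by
    have h2 := H.inv {0} B' {-1, 1} hAne hB'ne hCne (Equiv.neg ℚ) autoSep_neg hInd
    rwa [show pimg (Equiv.neg ℚ) ({0} : Finset ℚ) = {0} by simp [pimg], hCfix] at h2
  have hB''ne : (pimg (Equiv.neg ℚ) B').Nonempty := by
    rw [hB']; simp [pimg]
  obtain ⟨h₁, h₁auto, h₁fix, h₁eq⟩ :=
    H.staLeft {0} B' (pimg (Equiv.neg ℚ) B') {-1, 1} hAne hB'ne hB''ne hCne hInd hInd2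
      (Equiv.neg ℚ) autoSep_neg hnegfix rfl
  have h₁0 : h₁ 0 = 0 := h₁fix 0 (by simp)
  have h₁1 : h₁ 1 = 1 := h₁fix 1 (by simp)
  have h₁m1 : h₁ (-1) = -1 := h₁fix (-1) (by simp)
  have h₁u : h₁ u = -u := by have := h₁eq u huB; simpa using this
  have h₁v : h₁ v = -v := by have := h₁eq v hvB; simpa using this
  have hub := excl h₁auto h₁0 h₁1 h₁m1 h₁u hu0
  have hvb := excl h₁auto h₁0 h₁1 h₁m1 h₁v hv0
  obtain ⟨h₂, h₂auto, h₂fix, h₂eq⟩ :=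
    H.staRight {0} B' {-1, 1} {-1, 1} hAne hB'ne hCne hCne hInd hInd
      (Equiv.neg ℚ) autoSep_neg hnegfix hCfix
  have h₂0 : h₂ 0 = 0 := h₂fix 0 (by simp)
  have h₂u : h₂ u = u := h₂fix u (by simp [huB])
  have h₂v : h₂ v = v := h₂fix v (by simp [hvB])
  have h₂1 : h₂ 1 = -1 := by have := h₂eq 1 (by simp); simpa using this
  have h₂m1 : h₂ (-1) = 1 := by have := h₂eq (-1) (by simp); simpa using this
  exact final h₂auto h₂0 h₂1 h₂m1 h₂u h₂v huv hub hvb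


end Stmt14
end

section
/- The dense local order S(2) is ultrahomogeneous: for all finite subsets A, B of S(2) and every bijection h : A → B such that for all x, y ∈ A, x → y if and only if h(x) → h(y), there is a bijection g : S(2) → S(2) preserving → in both directions with g(a) = h(a) for all a ∈ A. -/
/-!
Write a point of `S(2)` as `r + ε/2` with `r ∈ [0, 1/2)` and `ε ∈ {0, 1}`. Then `x → y`
holds iff `r < r'` and `ε = ε'`, or `r' < r` and `ε ≠ ε'`. Hence every order automorphism of
`[0, 1/2) ∩ ℚ`, acting on `r` and leaving `ε` alone, is an automorphism of `S(2)`, and so is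
every rotation. Rotate so that a chosen point of `A` and its image both sit at `0`. A partial
isomorphism then preserves `ε`, which is read off from the relation to `0` (the antipode
`1/2` of `0` being the only other point unrelated to it), and hence also the order of the `r`s.
By ultrahomogeneity of the countable dense linear order `ℚ` (Fraïssé), this finite order
isomorphism on the `r`s, together with `1/2 ↦ 1/2`, extends to an order automorphism of `ℚ`,
which restricts to `[0, 1/2)`.
-/

namespace Stmt15

/-- The vertex set of the dense local order `S(2)`: rational points of the circle,
identified with their arguments as fractions of a full turn. -/
def S2 : Type := {q : ℚ // 0 ≤ q ∧ q < 1}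

/-- The tournament relation of `S(2)`: `x → y` iff the fractional part of `y - x` lies
strictly between `0` and `1/2`. -/
def s2rel (x y : S2) : Prop :=
  0 < Int.fract (y.1 - x.1) ∧ Int.fract (y.1 - x.1) < 1/2

open FirstOrder Language in
theorem exists_orderIso_extend_of_finite {α : Type*} [LinearOrder α] [Countable α]
    [DenselyOrdered α] [NoMinOrder α] [NoMaxOrder α] [Nonempty α] {s : Set α} (hs : s.Finite)
    (f : s ↪o α) : ∃ g : α ≃o α, ∀ x : s, g x = f x := by
  let := orderStructure α
  have : Language.order.OrderedStructure α := ⟨fun _ => Iff.rfl⟩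
  let S : Language.order.Substructure α := Substructure.closure Language.order s
  have hS : (S : Set α) = s := LowerAdjoint.closure_eq_self_of_mem_closed _
    (Substructure.mem_closed_of_isRelational Language.order s)
  let fS : S ↪o α := (OrderIso.setCongr _ _ hS).toOrderEmbedding.trans f
  obtain ⟨g, hg⟩ := (isFraisseLimit_of_countable_nonempty_dlo α).ultrahomogeneous S
    (Substructure.fg_def.2 ⟨s, hs, rfl⟩) (StrongHomClass.toEmbedding fS)
  let := StrongHomClass.toOrderIsoClass Language.order α α (α ≃[Language.order] α)
  refine ⟨g, fun x => ?_⟩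
  have hx : (x : α) ∈ S := by rw [← SetLike.mem_coe, hS]; exact x.2
  exact (DFunLike.congr_fun hg ⟨x, hx⟩).symm

theorem exists_orderIso_apply_eq {α ι : Type*} [LinearOrder α] [Countable α]
    [DenselyOrdered α] [NoMinOrder α] [NoMaxOrder α] [Nonempty α] [Finite ι] (u v : ι → α)
    (huv : ∀ i j, u i < u j ↔ v i < v j) : ∃ g : α ≃o α, ∀ i, g (u i) = v i := by
  have hv_eq : ∀ i j, u i = u j → v i = v j := fun i j h => by
    simp only [le_antisymm_iff, ← not_lt, huv] at h ⊢
    exact h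
  let f : Set.range u ↪o α := OrderEmbedding.ofStrictMono (v ∘ Set.rangeSplitting u)
    fun x y hxy => (huv _ _).1 <| by
      simpa only [Function.comp, Set.apply_rangeSplitting] using Subtype.coe_lt_coe.2 hxy
  obtain ⟨g, hg⟩ := exists_orderIso_extend_of_finite (Set.finite_range u) f
  exact ⟨g, fun i => (hg ⟨u i, i, rfl⟩).trans (hv_eq _ _ (Set.apply_rangeSplitting u _))⟩

def OrderIso.restrictIco {α : Type*} [Preorder α] (g : α ≃o α) {a b : α} (ha : g a = a)
    (hb : g b = b) : Set.Ico a b ≃o Set.Ico a b where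
  toEquiv := g.toEquiv.subtypeEquiv fun x => by
    simp only [Set.mem_Ico, OrderIso.coe_toEquiv]
    conv_rhs => rw [← ha, ← hb, g.le_iff_le, g.lt_iff_lt]
  map_rel_iff' := g.le_iff_le

theorem exists_orderIso_Ico_apply_eq {α ι : Type*} [LinearOrder α] [Countable α]
    [DenselyOrdered α] [NoMinOrder α] [NoMaxOrder α] [Finite ι] {a b : α}
    (u v : ι → Set.Ico a b) (huv : ∀ i j, u i < u j ↔ v i < v j) (i₀ : ι)
    (hu : (u i₀ : α) = a) (hv : (v i₀ : α) = a) :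
    ∃ F : Set.Ico a b ≃o Set.Ico a b, ∀ i, F (u i) = v i := by
  have : Nonempty α := ⟨a⟩
  obtain ⟨g, hg⟩ := exists_orderIso_apply_eq (fun o : Option ι => o.elim b fun i => (u i : α))
    (fun o => o.elim b fun i => (v i : α)) <| by
      have hub : ∀ i, ¬ b < (u i : α) := fun i => (u i).2.2.asymm
      have hvb : ∀ i, ¬ b < (v i : α) := fun i => (v i).2.2.asymm
      rintro (_ | i) (_ | j) <;> simp [(u _).2.2, (v _).2.2, hub, hvb, huv]
  have ha : g a = a := by simpa [hu, hv] using hg (some i₀)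
  exact ⟨OrderIso.restrictIco g ha (hg none), fun i => Subtype.ext (hg (some i))⟩

def doubleRel {α : Type*} [LT α] (p q : α × Bool) : Prop :=
  (p.1 < q.1 ∧ p.2 = q.2) ∨ (q.1 < p.1 ∧ p.2 ≠ q.2)

theorem doubleRel_prodMap {α β : Type*} [LT α] [LT β] {F : α → β}
    (hF : ∀ a b, F a < F b ↔ a < b) (p q : α × Bool) :
    doubleRel (Prod.map F id p) (Prod.map F id q) ↔ doubleRel p q := by
  simp [doubleRel, hF]

theorem snd_eq_true_iff_doubleRel {α : Type*} [LinearOrder α] {a : α} (ha : IsBot a)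
    (p : α × Bool) : p.2 = true ↔
      doubleRel p (a, false) ∨ (p ≠ (a, false) ∧ ¬ doubleRel (a, false) p) := by
  obtain ⟨x, _ | _⟩ := p <;> rcases (ha x).lt_or_eq with hx | rfl <;>
    simp [doubleRel, *, le_of_lt]

theorem snd_eq_of_doubleRel_iff {α β ι : Type*} [LinearOrder α] [LinearOrder β]
    {u : ι → α × Bool} {v : ι → β × Bool} (hu : Function.Injective u)
    (hv : Function.Injective v) (huv : ∀ i j, doubleRel (u i) (u j) ↔ doubleRel (v i) (v j))
    {i₀ : ι} {a : α} {b : β} (ha : IsBot a) (hb : IsBot b) (hui₀ : u i₀ = (a, false))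
    (hvi₀ : v i₀ = (b, false)) (i : ι) : (u i).2 = (v i).2 := by
  rw [Bool.eq_iff_iff, snd_eq_true_iff_doubleRel ha, snd_eq_true_iff_doubleRel hb, ← hui₀,
    ← hvi₀, huv, huv, hu.ne_iff, hv.ne_iff]

theorem fst_lt_iff_of_doubleRel_iff {α β ι : Type*} [LT α] [LT β]
    {u : ι → α × Bool} {v : ι → β × Bool}
    (huv : ∀ i j, doubleRel (u i) (u j) ↔ doubleRel (v i) (v j))
    (hsnd : ∀ i, (u i).2 = (v i).2) (i j : ι) : (u i).1 < (u j).1 ↔ (v i).1 < (v j).1 := by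
  by_cases h : (u i).2 = (u j).2
  · have := huv i j
    simp_all [doubleRel]
  · have := huv j i
    simp_all [doubleRel, eq_comm]

theorem s2rel_iff (x y : S2) :
    s2rel x y ↔ (x.1 < y.1 ∧ y.1 < x.1 + 1/2) ∨ y.1 + 1/2 < x.1 := by
  obtain ⟨x, hx0, hx1⟩ := x
  obtain ⟨y, hy0, hy1⟩ := y
  unfold s2rel
  rcases le_or_gt x y with hxy | hxy
  · rw [Int.fract_eq_self.2 ⟨by linarith, by linarith⟩]
    constructor
    · rintro ⟨h1, h2⟩; left; constructor <;> linarith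
    · rintro (⟨h1, h2⟩ | h) <;> constructor <;> linarith
  · rw [← Int.fract_add_one, Int.fract_eq_self.2 ⟨by linarith, by linarith⟩]
    constructor
    · rintro ⟨h1, h2⟩; right; linarith
    · rintro (⟨h1, h2⟩ | h) <;> constructor <;> linarith

noncomputable def halfCoord : S2 ≃ Set.Ico (0 : ℚ) (1/2) × Bool where
  toFun x := if h : x.1 < 1/2 then (⟨x.1, x.2.1, h⟩, false)
    else (⟨x.1 - 1/2, by linarith, by linarith [x.2.2]⟩, true)
  invFun p := ⟨p.1 + if p.2 then 1/2 else 0, by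
    obtain ⟨⟨r, hr0, hr1⟩, _ | _⟩ := p <;> constructor <;> simp <;> linarith⟩
  left_inv x := by
    apply Subtype.ext
    by_cases h : x.1 < 1/2 <;> simp only [h, dite_true, dite_false] <;> norm_num
  right_inv p := by
    obtain ⟨⟨r, hr0, hr1⟩, _ | _⟩ := p
    · simp only [Bool.false_eq_true, ↓reduceIte, add_zero, dif_pos hr1]
    · simp only [↓reduceIte, dif_neg (show ¬ r + 1/2 < 1/2 by linarith), add_sub_cancel_right]

theorem halfCoord_apply_of_lt (x : S2) (hx : x.1 < 1/2) :
    halfCoord x = (⟨x.1, x.2.1, hx⟩, false) :=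
  dif_pos hx

theorem halfCoord_symm_coe (p : Set.Ico (0 : ℚ) (1/2) × Bool) :
    (halfCoord.symm p).1 = p.1 + if p.2 then 1/2 else 0 := rfl

theorem s2rel_halfCoord_symm (p q : Set.Ico (0 : ℚ) (1/2) × Bool) :
    s2rel (halfCoord.symm p) (halfCoord.symm q) ↔ doubleRel p q := by
  rw [s2rel_iff, halfCoord_symm_coe, halfCoord_symm_coe]
  obtain ⟨⟨r, hr0, hr1⟩, _ | _⟩ := p <;> obtain ⟨⟨s, hs0, hs1⟩, _ | _⟩ := q <;>
    simp only [doubleRel, ← Subtype.coe_lt_coe] <;> grind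

theorem s2rel_iff_doubleRel (x y : S2) : s2rel x y ↔ doubleRel (halfCoord x) (halfCoord y) := by
  rw [← s2rel_halfCoord_symm, Equiv.symm_apply_apply, Equiv.symm_apply_apply]

noncomputable def rotate (c : ℚ) : Equiv.Perm S2 where
  toFun x := ⟨Int.fract (x.1 + c), Int.fract_nonneg _, Int.fract_lt_one _⟩
  invFun x := ⟨Int.fract (x.1 - c), Int.fract_nonneg _, Int.fract_lt_one _⟩
  left_inv x := Subtype.ext <| .trans (Int.fract_eq_fract.2 ⟨-⌊x.1 + c⌋, by
    show Int.fract (x.1 + c) - c - x.1 = _; rw [← Int.self_sub_floor]; push_cast; ring⟩)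
    (Int.fract_eq_self.2 x.2)
  right_inv x := Subtype.ext <| .trans (Int.fract_eq_fract.2 ⟨-⌊x.1 - c⌋, by
    show Int.fract (x.1 - c) + c - x.1 = _; rw [← Int.self_sub_floor]; push_cast; ring⟩)
    (Int.fract_eq_self.2 x.2)

theorem rotate_coe (c : ℚ) (x : S2) : (rotate c x).1 = Int.fract (x.1 + c) := rfl

theorem rotate_symm_coe (c : ℚ) (x : S2) : ((rotate c).symm x).1 = Int.fract (x.1 - c) := rfl

theorem halfCoord_rotate_symm_self (x : S2) :
    halfCoord ((rotate x.1).symm x) = (⟨0, le_rfl, by norm_num⟩, false) := by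
  have h0 : ((rotate x.1).symm x).1 = 0 := by rw [rotate_symm_coe, sub_self, Int.fract_zero]
  rw [halfCoord_apply_of_lt _ (by rw [h0]; norm_num)]
  simp only [h0]

theorem s2rel_rotate (c : ℚ) (x y : S2) : s2rel (rotate c x) (rotate c y) ↔ s2rel x y := by
  have : Int.fract ((rotate c y).1 - (rotate c x).1) = Int.fract (y.1 - x.1) :=
    Int.fract_eq_fract.2 ⟨⌊x.1 + c⌋ - ⌊y.1 + c⌋, by
      rw [rotate_coe, rotate_coe, ← Int.self_sub_floor, ← Int.self_sub_floor]
      push_cast; ring⟩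
  simp only [s2rel, this]

theorem s2rel_rotate_symm (c : ℚ) (x y : S2) :
    s2rel ((rotate c).symm x) ((rotate c).symm y) ↔ s2rel x y := by
  rw [← s2rel_rotate c, Equiv.apply_symm_apply, Equiv.apply_symm_apply]

noncomputable def permOfIcoIso (F : Set.Ico (0 : ℚ) (1/2) ≃o Set.Ico (0 : ℚ) (1/2)) :
    Equiv.Perm S2 :=
  halfCoord.trans ((F.toEquiv.prodCongr (Equiv.refl Bool)).trans halfCoord.symm)

theorem halfCoord_permOfIcoIso (F : Set.Ico (0 : ℚ) (1/2) ≃o Set.Ico (0 : ℚ) (1/2)) (x : S2) :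
    halfCoord (permOfIcoIso F x) = Prod.map F id (halfCoord x) := by
  simp [permOfIcoIso, Equiv.prodCongr_apply]

theorem s2rel_permOfIcoIso (F : Set.Ico (0 : ℚ) (1/2) ≃o Set.Ico (0 : ℚ) (1/2)) (x y : S2) :
    s2rel (permOfIcoIso F x) (permOfIcoIso F y) ↔ s2rel x y := by
  rw [s2rel_iff_doubleRel, s2rel_iff_doubleRel, halfCoord_permOfIcoIso, halfCoord_permOfIcoIso,
    doubleRel_prodMap fun a b => F.lt_iff_lt]

/-- the dense local order `S(2)` is ultrahomogeneous: every isomorphism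
between finite subsets of `S(2)` extends to an automorphism of `S(2)`. -/
theorem S2_ultrahomogeneous :
    ∀ (A B : Finset S2) (h : (↑A : Set S2) → (↑B : Set S2)), Function.Bijective h →
      (∀ x y : (↑A : Set S2), s2rel (x : S2) (y : S2) ↔ s2rel (h x : S2) (h y : S2)) →
      ∃ g : Equiv.Perm S2, (∀ a b : S2, s2rel (g a) (g b) ↔ s2rel a b) ∧
        ∀ x : (↑A : Set S2), g (x : S2) = (h x : S2) := by
  intro A B h hbij hiff
  rcases A.eq_empty_or_nonempty with rfl | ⟨a₀, ha₀⟩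
  · exact ⟨1, fun _ _ => Iff.rfl, fun x => absurd x.2 (by simp)⟩
  let x₀ : (↑A : Set S2) := ⟨a₀, ha₀⟩
  let c := (x₀ : S2).1
  let d := (h x₀ : S2).1
  let u := fun x : (↑A : Set S2) => halfCoord ((rotate c).symm x)
  let v := fun x : (↑A : Set S2) => halfCoord ((rotate d).symm (h x))
  have hrel : ∀ x y, doubleRel (u x) (u y) ↔ doubleRel (v x) (v y) := fun x y => by
    simp only [u, v, ← s2rel_iff_doubleRel, s2rel_rotate_symm, hiff]
  have hbot : IsBot (⟨0, le_rfl, by norm_num⟩ : Set.Ico (0 : ℚ) (1/2)) := fun x => x.2.1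
  have hsnd : ∀ x, (u x).2 = (v x).2 :=
    snd_eq_of_doubleRel_iff (halfCoord.injective.comp ((rotate c).symm.injective.comp
      Subtype.val_injective)) (halfCoord.injective.comp ((rotate d).symm.injective.comp
      (Subtype.val_injective.comp hbij.1))) hrel (i₀ := x₀) hbot hbot
      (by simp only [u, c, halfCoord_rotate_symm_self])
      (by simp only [v, d, halfCoord_rotate_symm_self])
  obtain ⟨F, hF⟩ := exists_orderIso_Ico_apply_eq (fun x => (u x).1) (fun x => (v x).1)
    (fst_lt_iff_of_doubleRel_iff hrel hsnd) x₀
    (by simp only [u, c, halfCoord_rotate_symm_self])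
    (by simp only [v, d, halfCoord_rotate_symm_self])
  refine ⟨(rotate c).symm.trans ((permOfIcoIso F).trans (rotate d)), fun a b => ?_, fun x => ?_⟩
  · simp only [Equiv.trans_apply, s2rel_rotate, s2rel_permOfIcoIso, s2rel_rotate_symm]
  · have : permOfIcoIso F ((rotate c).symm x) = (rotate d).symm (h x) :=
      halfCoord.injective (by rw [halfCoord_permOfIcoIso]; exact Prod.ext (hF x) (hsnd x))
    simp only [Equiv.trans_apply, this, Equiv.apply_symm_apply]

end Stmt15
end
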